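/- arXiv:2201.05883 — 10 statements merged into one kernel-verified Lean document; each statement's English description precedes it below -/
import Mathlib

section
/- Let 𝙰 and 𝙲 be finite sets, φ : 𝙰^G → 𝙲 a continuous map with induced equivariant map Φ : 𝙰^G → 𝙲^G, μ a shift-invariant Borel probability measure on 𝙰^G, and Z ⊆ 𝙰^G a subshift with μ(Z) = 1. Suppose Y = Φ(Z) and Φ restricted to Z is a homeomorphism onto Y. Then f^Z_μ(𝙰^G) = f^Y_μ(φ). -/
/-!
Since `Z` is compact and `Φ` is injective on it, the sets `Φ(Z ∩ {z | z 1 = a})`, `a ∈ 𝙰`, are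
disjoint compact subsets of the Cantor-type space `𝙲^G`, so a clopen partition separating them
yields a continuous `θ : 𝙲^G → 𝙰` with `θ (Φ z) = z 1` on `Z`. By shift-invariance of `Z` the
induced map `Θ` inverts `Φ` on `Z`, and `Θ_* Φ_* μ = μ`.

A sliding block code `Ψ` injective on `Z` and mapping `Z` into `W` acts on finite configurations
by applying its observable to every pullback name; this maps `Ω_Z(σ, Ψ_*⁻¹ 𝒰)` injectively into
`Ω_W(σ, 𝒰)`, so `f^Z_μ ≤ f^W_{Ψ_*μ}`. Applying this to `Φ` and to `Θ` gives both inequalities.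
-/

open MeasureTheory Filter
open scoped ENNReal NNReal

namespace Stmt2

abbrev G (r : ℕ) : Type := FreeGroup (Fin r)

instance (r : ℕ) : Countable (G r) := FreeGroup.toWord_injective.countable

/-- The left shift action of `G`: `(g·x)(f) = x(g⁻¹ f)`. -/
def shift (r : ℕ) {A : Type} (g : G r) (x : G r → A) : G r → A := fun f => x (g⁻¹ * f)

/-- The equivariant map induced by an observable `φ`: `Φ(x)(g) = φ(g⁻¹·x)`. -/
def Phi (r : ℕ) {A C : Type} (φ : (G r → A) → C) (x : G r → A) : G r → C :=
  fun g => φ (shift r g⁻¹ x)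

/-- The pullback name `x^σ_v(g) = x(σ(g)⁻¹ v)`. -/
def pull (r : ℕ) {n : ℕ} {A : Type} (σ : G r →* Equiv.Perm (Fin n))
    (x : Fin n → A) (v : Fin n) : G r → A :=
  fun g => x ((σ g)⁻¹ v)

/-- The empirical distribution `P^σ_x = (1/n) Σ_v δ_{x^σ_v}` (as a measure). -/
noncomputable def empMeas (r : ℕ) {n : ℕ} {A : Type} [MeasurableSpace A]
    (σ : G r →* Equiv.Perm (Fin n)) (x : Fin n → A) : Measure (G r → A) :=
  (n : ℝ≥0∞)⁻¹ • ∑ v : Fin n, Measure.dirac (pull r σ x v)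

/-- `Ω_Z(σ,𝒪)`. -/
def OmegaZ (r : ℕ) {n : ℕ} {A : Type} [Fintype A] [TopologicalSpace A]
    [DiscreteTopology A] [MeasurableSpace A] [BorelSpace A]
    (Z : Set (G r → A)) (σ : G r →* Equiv.Perm (Fin n))
    (O : Set (ProbabilityMeasure (G r → A))) : Set (Fin n → A) :=
  {x | ∃ h : IsProbabilityMeasure (empMeas r σ x),
    (⟨empMeas r σ x, h⟩ : ProbabilityMeasure (G r → A)) ∈ O ∧ empMeas r σ x Z = 1}

/-- `f^Z_ν(𝙰^G) = inf_{𝒪 ∋ ν} limsup_n (1/n) log E_{σ∼u_n} |Ω_Z(σ,𝒪)|`. -/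
noncomputable def fZ (r : ℕ) {A : Type} [Fintype A] [TopologicalSpace A]
    [DiscreteTopology A] [MeasurableSpace A] [BorelSpace A]
    (ν : ProbabilityMeasure (G r → A)) (Z : Set (G r → A)) : EReal :=
  ⨅ O : {O : Set (ProbabilityMeasure (G r → A)) // IsOpen O ∧ ν ∈ O},
    Filter.limsup (fun n : ℕ =>
      (((n : ℝ)⁻¹ : ℝ) : EReal) *
        ENNReal.log
          ((∑ f : Fin r → Equiv.Perm (Fin n),
            ((OmegaZ r Z (FreeGroup.lift f) O.val).ncard : ℝ≥0∞)) /
            ((n.factorial : ℝ≥0∞)) ^ r))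
      Filter.atTop

/-- A subshift: a closed shift-invariant subset. -/
def IsSubshift (r : ℕ) {A : Type} [TopologicalSpace A] (Z : Set (G r → A)) : Prop :=
  IsClosed Z ∧ ∀ g : G r, shift r g '' Z = Z


open Set

section Factorization

variable {X Y A : Type*} [TopologicalSpace X] [TopologicalSpace Y] [CompactSpace Y] [T2Space Y]
  [TotallyDisconnectedSpace Y] [TopologicalSpace A] [DiscreteTopology A] [Finite A] [Nonempty A]

theorem exists_continuous_comp_eq_of_injOn {F : X → Y} (hF : Continuous F) {Z : Set X}
    (hZ : IsCompact Z) (hinj : InjOn F Z) {p : X → A} (hp : Continuous p) :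
    ∃ θ : Y → A, Continuous θ ∧ ∀ z ∈ Z, θ (F z) = p z := by
  set K : A → Set Y := fun a => F '' (Z ∩ p ⁻¹' {a})
  have hK_closed : ∀ a, IsClosed (K a) := fun a =>
    ((hZ.inter_right ((isClosed_discrete _).preimage hp)).image hF).isClosed
  have hK_disj : univ.PairwiseDisjoint K := by
    rintro a - b - hab
    refine disjoint_left.2 ?_
    rintro _ ⟨x, ⟨hx, rfl⟩, rfl⟩ ⟨x', ⟨hx', rfl⟩, hxx'⟩
    exact hab (congrArg p (hinj hx' hx hxx')).symm
  obtain ⟨U, hU_clopen, hKU, -, hU_cover, hU_disj⟩ :=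
    exists_clopen_partition_of_clopen_cover hK_closed (fun _ => isClopen_univ)
      (fun _ => subset_univ _) hK_disj
  have hcover : ∀ y, ∃ a, y ∈ U a := fun y =>
    mem_iUnion.1 (hU_cover (mem_iUnion.2 ⟨Classical.arbitrary A, trivial⟩))
  choose θ hθ using hcover
  have hfiber : ∀ a, θ ⁻¹' {a} = U a := by
    refine fun a => ext fun y => ⟨fun h => h ▸ hθ y, fun hy => ?_⟩
    by_contra hne
    exact disjoint_left.1 (hU_disj (mem_univ _) (mem_univ _) hne) (hθ y) hy
  refine ⟨θ, (IsLocallyConstant.iff_isOpen_fiber.2 fun a => ?_).continuous, fun z hz => ?_⟩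
  · exact hfiber a ▸ (hU_clopen a).isOpen
  · rw [← mem_singleton_iff, ← mem_preimage, hfiber]
    exact hKU (p z) ⟨z, ⟨hz, rfl⟩, rfl⟩

end Factorization

section Shift

variable {r : ℕ} {A C : Type}

theorem continuous_shift [TopologicalSpace A] (g : G r) :
    Continuous (shift r g : (G r → A) → G r → A) :=
  continuous_pi fun _ => continuous_apply _

theorem continuous_Phi [TopologicalSpace A] [TopologicalSpace C] {φ : (G r → A) → C}
    (hφ : Continuous φ) : Continuous (Phi r φ) :=
  continuous_pi fun g => hφ.comp (continuous_shift g⁻¹)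

theorem shift_shift (a b : G r) (x : G r → A) : shift r a (shift r b x) = shift r (a * b) x := by
  funext f
  simp [shift, mul_assoc]

theorem Phi_shift (φ : (G r → A) → C) (g : G r) (x : G r → A) :
    Phi r φ (shift r g x) = shift r g (Phi r φ x) := by
  funext f
  simp [Phi, shift_shift, shift, mul_inv_rev]

theorem leftInvOn_Phi {φ : (G r → A) → C} {θ : (G r → C) → A} {Z : Set (G r → A)}
    (hZ : ∀ g : G r, shift r g '' Z = Z) (hθ : ∀ z ∈ Z, θ (Phi r φ z) = z 1) :
    LeftInvOn (Phi r θ) (Phi r φ) Z := by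
  intro z hz
  funext g
  have hgz : shift r g⁻¹ z ∈ Z := hZ g⁻¹ ▸ mem_image_of_mem _ hz
  calc Phi r θ (Phi r φ z) g = θ (Phi r φ (shift r g⁻¹ z)) := by rw [Phi_shift]; rfl
    _ = z g := by rw [hθ _ hgz]; simp [shift]

end Shift

section Sofic

variable {r n : ℕ} {A C : Type} (σ : G r →* Equiv.Perm (Fin n))

def PhiFin (ψ : (G r → A) → C) (x : Fin n → A) : Fin n → C := fun v => ψ (pull r σ x v)

theorem pull_apply_one (x : Fin n → A) (v : Fin n) : pull r σ x v 1 = x v := by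
  simp [pull]

theorem pull_PhiFin (ψ : (G r → A) → C) (x : Fin n → A) (v : Fin n) :
    pull r σ (PhiFin σ ψ x) v = Phi r ψ (pull r σ x v) := by
  funext g
  simp only [PhiFin, pull, Phi]
  congr 1
  funext f
  simp [pull, shift, mul_inv_rev]

variable [MeasurableSpace A] [MeasurableSpace C]

theorem empMeas_apply (x : Fin n → A) {s : Set (G r → A)} (hs : MeasurableSet s) :
    empMeas r σ x s = (n : ℝ≥0∞)⁻¹ * ∑ v, s.indicator 1 (pull r σ x v) := by
  simp only [empMeas, Measure.smul_apply, Measure.finsetSum_apply, smul_eq_mul,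
    Measure.dirac_apply' _ hs]

theorem empMeas_PhiFin {ψ : (G r → A) → C} (hψ : Measurable (Phi r ψ)) (x : Fin n → A) :
    empMeas r σ (PhiFin σ ψ x) = (empMeas r σ x).map (Phi r ψ) := by
  ext s hs
  rw [Measure.map_apply hψ hs, empMeas_apply σ _ hs, empMeas_apply σ x (hψ hs)]
  simp only [pull_PhiFin]
  rfl

theorem pull_mem_of_empMeas_eq_one {x : Fin n → A} [IsProbabilityMeasure (empMeas r σ x)]
    {Z : Set (G r → A)} (hZ : MeasurableSet Z) (h1 : empMeas r σ x Z = 1) (v : Fin n) :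
    pull r σ x v ∈ Z := by
  have h0 : empMeas r σ x Zᶜ = 0 := (prob_compl_eq_zero_iff hZ).2 h1
  rw [empMeas_apply σ x hZ.compl, mul_eq_zero, ENNReal.inv_eq_zero, Finset.sum_eq_zero_iff] at h0
  rcases h0 with h | h
  · exact absurd h (ENNReal.natCast_ne_top n)
  · by_contra hv
    simpa [indicator_of_mem (mem_compl hv)] using h v (Finset.mem_univ v)

end Sofic

section Entropy

variable {r : ℕ} {A C : Type}
  [Fintype A] [TopologicalSpace A] [DiscreteTopology A] [MeasurableSpace A] [BorelSpace A]

theorem injOn_PhiFin_OmegaZ {n : ℕ} (σ : G r →* Equiv.Perm (Fin n)) {ψ : (G r → A) → C}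
    {Z : Set (G r → A)} (hZ : MeasurableSet Z) (hinj : InjOn (Phi r ψ) Z)
    (O : Set (ProbabilityMeasure (G r → A))) :
    InjOn (PhiFin σ ψ) (OmegaZ r Z σ O) := by
  rintro x ⟨_, -, hxZ⟩ x' ⟨_, -, hx'Z⟩ heq
  funext v
  have hv : pull r σ x v = pull r σ x' v :=
    hinj (pull_mem_of_empMeas_eq_one σ hZ hxZ v) (pull_mem_of_empMeas_eq_one σ hZ hx'Z v)
      (by rw [← pull_PhiFin, ← pull_PhiFin, heq])
  simpa only [pull_apply_one] using congrFun hv 1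

variable [Fintype C] [TopologicalSpace C] [DiscreteTopology C] [MeasurableSpace C] [BorelSpace C]

theorem mapsTo_PhiFin_OmegaZ {n : ℕ} (σ : G r →* Equiv.Perm (Fin n)) {ψ : (G r → A) → C}
    (hψ : Measurable (Phi r ψ)) {Z : Set (G r → A)} {W : Set (G r → C)} (hW : MeasurableSet W)
    (hZW : MapsTo (Phi r ψ) Z W) (U : Set (ProbabilityMeasure (G r → C))) :
    MapsTo (PhiFin σ ψ) (OmegaZ r Z σ ((fun P => P.map hψ.aemeasurable) ⁻¹' U))
      (OmegaZ r W σ U) := by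
  rintro x ⟨hx, hxU, hxZ⟩
  have hmap := empMeas_PhiFin σ hψ x
  have hx' : IsProbabilityMeasure (empMeas r σ (PhiFin σ ψ x)) :=
    hmap ▸ Measure.isProbabilityMeasure_map hψ.aemeasurable
  refine ⟨hx', ?_, ?_⟩
  · have hP : (⟨_, hx'⟩ : ProbabilityMeasure (G r → C)) =
        ProbabilityMeasure.map (⟨_, hx⟩ : ProbabilityMeasure (G r → A)) hψ.aemeasurable :=
      Subtype.ext hmap
    exact hP ▸ hxU
  · rw [hmap, Measure.map_apply hψ hW]
    exact le_antisymm prob_le_one (hxZ ▸ measure_mono hZW)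

theorem fZ_le_fZ_of_forall_ncard_le {μ : ProbabilityMeasure (G r → A)}
    {ν : ProbabilityMeasure (G r → C)} {Z : Set (G r → A)} {W : Set (G r → C)}
    (h : ∀ U : Set (ProbabilityMeasure (G r → C)), IsOpen U → ν ∈ U →
      ∃ O : Set (ProbabilityMeasure (G r → A)), IsOpen O ∧ μ ∈ O ∧
        ∀ (n : ℕ) (σ : G r →* Equiv.Perm (Fin n)),
          (OmegaZ r Z σ O).ncard ≤ (OmegaZ r W σ U).ncard) :
    fZ r μ Z ≤ fZ r ν W := by
  refine le_iInf fun ⟨U, hU, hνU⟩ => ?_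
  obtain ⟨O, hO, hμO, hcard⟩ := h U hU hνU
  refine (iInf_le _ ⟨O, hO, hμO⟩).trans (limsup_le_limsup (Eventually.of_forall fun n => ?_))
  refine mul_le_mul_of_nonneg_left (ENNReal.log_monotone ?_)
    (EReal.coe_nonneg.2 (inv_nonneg.2 n.cast_nonneg))
  gcongr with f
  exact hcard _ _

theorem fZ_le_fZ_of_injOn {ψ : (G r → A) → C} (hψ : Continuous ψ)
    {μ : ProbabilityMeasure (G r → A)} {ν : ProbabilityMeasure (G r → C)}
    (hν : ν.toMeasure = μ.toMeasure.map (Phi r ψ)) {Z : Set (G r → A)} {W : Set (G r → C)}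
    (hZ : MeasurableSet Z) (hW : MeasurableSet W) (hZW : MapsTo (Phi r ψ) Z W)
    (hinj : InjOn (Phi r ψ) Z) :
    fZ r μ Z ≤ fZ r ν W := by
  have hΦ := continuous_Phi hψ
  refine fZ_le_fZ_of_forall_ncard_le fun U hU hνU =>
    ⟨_, hU.preimage (ProbabilityMeasure.continuous_map hΦ), ?_, fun n σ =>
      ncard_le_ncard_of_injOn _ (mapsTo_PhiFin_OmegaZ σ hΦ.measurable hW hZW U)
        (injOn_PhiFin_OmegaZ σ hZ hinj _)⟩
  have hμν : μ.map hΦ.measurable.aemeasurable = ν := Subtype.ext hν.symm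
  rwa [mem_preimage, hμν]

end Entropy

theorem statement2_general (r : ℕ) {A C : Type}
    [Fintype A] [TopologicalSpace A] [DiscreteTopology A] [MeasurableSpace A]
    [BorelSpace A]
    [Fintype C] [TopologicalSpace C] [DiscreteTopology C] [MeasurableSpace C]
    [BorelSpace C]
    (φ : (G r → A) → C) (hφ : Continuous φ)
    (μ : ProbabilityMeasure (G r → A))
    (Z : Set (G r → A)) (hZ : IsSubshift r Z) (hμZ : μ.toMeasure Z = 1)
    (Y : Set (G r → C)) (hY : Y = Phi r φ '' Z)
    (hhomeo : Topology.IsEmbedding (fun z : Z => Phi r φ z.val))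
    (ν : ProbabilityMeasure (G r → C))
    (hν : ν.toMeasure = μ.toMeasure.map (Phi r φ)) :
    fZ r μ Z = fZ r ν Y := by
  subst hY
  have : Nonempty A := ⟨(nonempty_of_isProbabilityMeasure μ.toMeasure).some 1⟩
  have hΦ := continuous_Phi hφ
  have hZm := hZ.1.measurableSet
  have hYm := (hZ.1.isCompact.image hΦ).isClosed.measurableSet
  have hinj : InjOn (Phi r φ) Z := fun x hx y hy h =>
    congrArg Subtype.val (hhomeo.injective (a₁ := ⟨x, hx⟩) (a₂ := ⟨y, hy⟩) h)
  obtain ⟨θ, hθ, hθZ⟩ :=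
    exists_continuous_comp_eq_of_injOn hΦ hZ.1.isCompact hinj (continuous_apply 1)
  have hleft : LeftInvOn (Phi r θ) (Phi r φ) Z := leftInvOn_Phi hZ.2 hθZ
  have hμ : μ.toMeasure = ν.toMeasure.map (Phi r θ) := by
    have hae : Phi r θ ∘ Phi r φ =ᵐ[μ.toMeasure] id :=
      eventuallyEq_of_mem (mem_ae_iff.2 ((prob_compl_eq_zero_iff hZm).2 hμZ)) hleft
    rw [hν, Measure.map_map (continuous_Phi hθ).measurable hΦ.measurable,
      Measure.map_congr hae, Measure.map_id]
  exact le_antisymm (fZ_le_fZ_of_injOn hφ hν hZm hYm (mapsTo_image _ _) hinj)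
    (fZ_le_fZ_of_injOn hθ hμ hYm hZm (mapsTo_iff_image_subset.2 hleft.image_image.subset)
      (LeftInvOn.injOn hleft.rightInvOn_image))

/-- Claim `C:restricted_invar`. -/
theorem statement2 (r : ℕ) (hr : 1 ≤ r) {A C : Type}
    [Fintype A] [TopologicalSpace A] [DiscreteTopology A] [MeasurableSpace A]
    [BorelSpace A]
    [Fintype C] [TopologicalSpace C] [DiscreteTopology C] [MeasurableSpace C]
    [BorelSpace C]
    (φ : (G r → A) → C) (hφ : Continuous φ)
    (μ : ProbabilityMeasure (G r → A))
    (hinv : ∀ g : G r, μ.toMeasure.map (shift r g) = μ.toMeasure)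
    (Z : Set (G r → A)) (hZ : IsSubshift r Z) (hμZ : μ.toMeasure Z = 1)
    (Y : Set (G r → C)) (hY : Y = Phi r φ '' Z)
    (hhomeo : Topology.IsEmbedding (fun z : Z => Phi r φ z.val))
    (ν : ProbabilityMeasure (G r → C))
    (hν : ν.toMeasure = μ.toMeasure.map (Phi r φ)) :
    fZ r μ Z = fZ r ν Y :=
  statement2_general r φ hφ μ Z hZ hμZ Y hY hhomeo ν hν

end Stmt2
end

section
/- Let n, m ∈ ℕ, let σ : G → Sym(n) be a group homomorphism, let 𝙲 be a finite set, and let η : [n] → 𝙲^{B(e,m)} be a map such that for every s ∈ S, every v ∈ [n], and every g ∈ G with |g|_G ≤ m and |s⁻¹g|_G ≤ m, one has η(v)(g) = η(σ(s⁻¹)v)(s⁻¹g). Define ψ : [n] → 𝙲 by ψ(v) = η(v)(e). Then η(v)(f) = ψ(σ(f⁻¹)v) for every v ∈ [n] and every f ∈ G with |f|_G ≤ m. In particular, the map η ↦ ψ is injective on the set of all η satisfying the above consistency condition. -/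
/- The claim inside the proof of Lemma (Markov simplification): an observable
   η : [n] → 𝙲^{B(e,m)} which is locally consistent along σ is determined by
   ψ(v) = η(v)(e), via η(v)(f) = ψ(σ(f⁻¹)v). -/

namespace Stmt4

abbrev G (r : ℕ) : Type := FreeGroup (Fin r)

/-- The ball `B(e,m)` as a subtype. -/
abbrev Ball (r m : ℕ) : Type := {g : G r // g.norm ≤ m}

/-- The consistency condition: for every generator `s = s_i`, every `v ∈ [n]` and every
`g` with `|g| ≤ m` and `|s⁻¹ g| ≤ m`, one has `η(v)(g) = η(σ(s⁻¹)v)(s⁻¹ g)`. -/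
def Consistent (r n m : ℕ) {C : Type*} (σ : G r →* Equiv.Perm (Fin n))
    (η : Fin n → (Ball r m → C)) : Prop :=
  ∀ (i : Fin r) (v : Fin n) (g : G r) (hg : g.norm ≤ m)
    (hg' : ((FreeGroup.of i)⁻¹ * g).norm ≤ m),
    η v ⟨g, hg⟩ = η ((σ ((FreeGroup.of i)⁻¹)) v) ⟨(FreeGroup.of i)⁻¹ * g, hg'⟩


lemma reduce_tail {α : Type*} [DecidableEq α] (x : α × Bool) (L : List (α × Bool))
    (h : FreeGroup.reduce (x :: L) = x :: L) : FreeGroup.reduce L = L := by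
  rw [FreeGroup.reduce.cons] at h
  rcases hr : FreeGroup.reduce L with _ | ⟨hd, tl⟩
  · rw [hr] at h
    simp only [List.casesOn] at h
    simp_all
  · rw [hr] at h
    dsimp only at h
    by_cases hc : x.1 = hd.1 ∧ x.2 = !hd.2
    · rw [if_pos hc] at h
      have h1 : tl.length ≤ L.length := by
        have := (FreeGroup.reduce.red (L := L)).length_le
        rw [hr] at this; simpa using Nat.le_of_succ_le this
      rw [h] at h1
      simp at h1
    · rw [if_neg hc] at h
      injection h.symm with h1 h2
      rw [h2, ← hr]

lemma mk_single_true {r : ℕ} (i : Fin r) :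
    FreeGroup.mk [(i, true)] = FreeGroup.of i := rfl

lemma mk_single_false {r : ℕ} (i : Fin r) :
    FreeGroup.mk [(i, false)] = (FreeGroup.of i)⁻¹ := by
  rw [← mk_single_true, FreeGroup.inv_mk]; rfl

/-- Decomposition: any nontrivial element splits off a generator (or inverse). -/
lemma split {r : ℕ} (f : G r) (hf : f ≠ 1) :
    ∃ (i : Fin r) (b : Bool) (f' : G r),
      f = FreeGroup.mk [(i, b)] * f' ∧ f'.norm + 1 = f.norm := by
  rcases hw : f.toWord with _ | ⟨⟨i, b⟩, L⟩
  · exact absurd (FreeGroup.toWord_eq_nil_iff.mp hw) hf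
  · refine ⟨i, b, FreeGroup.mk L, ?_, ?_⟩
    · have h1 : f = FreeGroup.mk (((i, b)) :: L) := by
        rw [← hw, FreeGroup.mk_toWord]
      rw [h1, FreeGroup.mul_mk]; rfl
    · have hred : FreeGroup.reduce ((i, b) :: L) = (i, b) :: L := by
        rw [← hw]; exact FreeGroup.reduce_toWord f
      have : FreeGroup.reduce L = L := reduce_tail _ _ hred
      simp [FreeGroup.norm, FreeGroup.toWord_mk, this, hw]

lemma key {r n m : ℕ} {C : Type*} (σ : G r →* Equiv.Perm (Fin n))
    (η : Fin n → (Ball r m → C)) (hη : Consistent r n m σ η)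
    (ψ : Fin n → C) (hψ : ∀ v, ψ v = η v ⟨1, by simp [FreeGroup.norm_one]⟩) :
    ∀ (k : ℕ) (f : G r), f.norm ≤ k → ∀ (hf : f.norm ≤ m) (v : Fin n),
      η v ⟨f, hf⟩ = ψ ((σ f⁻¹) v) := by
  intro k
  induction k with
  | zero =>
    intro f hk hf v
    have h1 : f = 1 := FreeGroup.norm_eq_zero.mp (Nat.le_zero.mp hk)
    subst h1
    simp [hψ v]
  | succ k ih =>
    intro f hk hf v
    by_cases h1 : f = 1
    · subst h1; simp [hψ v]
    · obtain ⟨i, b, f', hsplit, hnorm⟩ := split f h1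
      have hf' : f'.norm ≤ m := by omega
      have hk' : f'.norm ≤ k := by omega
      cases b
      · -- f = (of i)⁻¹ * f'
        rw [mk_single_false] at hsplit
        have hfn : (FreeGroup.of i)⁻¹ * f' = f := hsplit.symm
        have hc := hη i ((σ (FreeGroup.of i)) v) f' hf' (by rw [hfn]; exact hf)
        have hv : (σ ((FreeGroup.of i)⁻¹)) ((σ (FreeGroup.of i)) v) = v := by
          rw [← Equiv.Perm.mul_apply, ← map_mul]; simp
        rw [hv] at hc
        rw [ih f' hk' hf' ((σ (FreeGroup.of i)) v)] at hc
        have heq : η v ⟨(FreeGroup.of i)⁻¹ * f', by rw [hfn]; exact hf⟩ = η v ⟨f, hf⟩ := by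
          congr 1; exact Subtype.ext hfn
        rw [heq] at hc
        rw [← hc]
        congr 1
        rw [hsplit, mul_inv_rev, inv_inv, map_mul, Equiv.Perm.mul_apply]
      · -- f = of i * f'
        rw [mk_single_true] at hsplit
        have hr2 : (FreeGroup.of i)⁻¹ * f = f' := by rw [hsplit, inv_mul_cancel_left]
        have hg' : ((FreeGroup.of i)⁻¹ * f).norm ≤ m := by rw [hr2]; exact hf'
        have hc := hη i v f hf hg'
        have heq : η ((σ (FreeGroup.of i)⁻¹) v) ⟨(FreeGroup.of i)⁻¹ * f, hg'⟩
            = η ((σ (FreeGroup.of i)⁻¹) v) ⟨f', hf'⟩ := by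
          congr 1; exact Subtype.ext hr2
        rw [heq] at hc
        rw [hc, ih f' hk' hf' _]
        congr 1
        rw [hsplit, mul_inv_rev, map_mul, Equiv.Perm.mul_apply]

/-- `η(v)(f) = ψ(σ(f⁻¹)v)` for all `|f| ≤ m`, where `ψ(v) = η(v)(e)`;
in particular `η ↦ ψ` is injective on consistent observables. -/
theorem statement4 (r n m : ℕ) (hr : 1 ≤ r) {C : Type*}
    (σ : G r →* Equiv.Perm (Fin n))
    (η : Fin n → (Ball r m → C)) (hη : Consistent r n m σ η)
    (ψ : Fin n → C) (hψ : ∀ v, ψ v = η v ⟨1, by simp [FreeGroup.norm_one]⟩) :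
    (∀ (v : Fin n) (f : G r) (hf : f.norm ≤ m),
        η v ⟨f, hf⟩ = ψ ((σ f⁻¹) v)) ∧
    ∀ η' : Fin n → (Ball r m → C), Consistent r n m σ η' →
      (∀ v, η' v ⟨1, by simp [FreeGroup.norm_one]⟩ = ψ v) → η' = η := by
  constructor
  · intro v f hf
    exact key σ η hη ψ hψ f.norm f le_rfl hf v
  · intro η' hη' hψ'
    funext v g
    obtain ⟨f, hf⟩ := g
    rw [key σ η hη ψ hψ f.norm f le_rfl hf v,
        key σ η' hη' ψ (fun v => (hψ' v).symm) f.norm f le_rfl hf v]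

end Stmt4
end

section
/- Under the standing hypotheses on T, U, α, β, for every g ∈ G and x ∈ X: α̂_{T^g x} = Θ^g α̂_x, α̂_{U^g x} = ℧^g α̂_x, β̂_{T^g x} = ℧^g β̂_x, and β̂_{U^g x} = Θ^g β̂_x. -/
/- Equivariance of the orbit-change maps: α̂_{T^g x} = Θ^g α̂_x, α̂_{U^g x} = ℧^g α̂_x,
   β̂_{T^g x} = ℧^g β̂_x, β̂_{U^g x} = Θ^g β̂_x, where
   (Θ^h φ)(k) = φ(h⁻¹)⁻¹ φ(h⁻¹ k) and (℧^h φ)(k) = h φ(φ⁻¹(h⁻¹) k). -/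

namespace Stmt10

abbrev G (r : ℕ) : Type := FreeGroup (Fin r)

lemma aux10 {Γ : Type*} [Group Γ] {X : Type*}
    (T U : Γ → X → X)
    (hT1 : ∀ x, T 1 x = x) (hTmul : ∀ g h x, T (g * h) x = T g (T h x))
    (hU1 : ∀ x, U 1 x = x) (hUmul : ∀ g h x, U (g * h) x = U g (U h x))
    (hTfree : ∀ (g : Γ) (x : X), T g x = x → g = 1)
    (hUfree : ∀ (g : Γ) (x : X), U g x = x → g = 1)
    (α β : Γ → X → Γ)
    (hα : ∀ (g : Γ) (x : X), U (α g x) x = T g x)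
    (hβ : ∀ (g : Γ) (x : X), T (β g x) x = U g x)
    (hatα hatβ : X → Γ → Γ)
    (hhatα : ∀ (x : X) (g : Γ), hatα x g = (α g⁻¹ x)⁻¹)
    (hhatβ : ∀ (x : X) (g : Γ), hatβ x g = (β g⁻¹ x)⁻¹) :
    (∀ (g : Γ) (x : X) (k : Γ),
        hatα (T g x) k = (hatα x g⁻¹)⁻¹ * hatα x (g⁻¹ * k)) ∧
    (∀ (g : Γ) (x : X) (k : Γ),
        hatα (U g x) k = g * hatα x (Function.invFun (hatα x) g⁻¹ * k)) := by
  -- uniqueness from freeness of U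
  have uniqU : ∀ (a b : Γ) (x : X), U a x = U b x → a = b := by
    intro a b x h
    have : U (b⁻¹ * a) x = x := by
      rw [hUmul, h, ← hUmul, inv_mul_cancel, hU1]
    have := hUfree _ _ this
    have : b * (b⁻¹ * a) = b * 1 := by rw [this]
    simpa [mul_assoc] using this
  have uniqT : ∀ (a b : Γ) (x : X), T a x = T b x → a = b := by
    intro a b x h
    have : T (b⁻¹ * a) x = x := by
      rw [hTmul, h, ← hTmul, inv_mul_cancel, hT1]
    have := hTfree _ _ this
    have : b * (b⁻¹ * a) = b * 1 := by rw [this]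
    simpa [mul_assoc] using this
  -- cocycle identity for α
  have coc : ∀ (g h : Γ) (x : X), α (g * h) x = α g (T h x) * α h x := by
    intro g h x
    apply uniqU _ _ x
    rw [hα, hUmul, hα, hα, hTmul]
  have αβ : ∀ (g : Γ) (x : X), α (β g x) x = g := by
    intro g x
    apply uniqU _ _ x
    rw [hα, hβ]
  have βα : ∀ (g : Γ) (x : X), β (α g x) x = g := by
    intro g x
    apply uniqT _ _ x
    rw [hβ, hα]
  have hab : ∀ (x : X) (y : Γ), hatα x (hatβ x y) = y := by
    intro x y
    rw [hhatβ, hhatα, inv_inv, αβ, inv_inv]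
  have hba : ∀ (x : X) (y : Γ), hatβ x (hatα x y) = y := by
    intro x y
    rw [hhatα, hhatβ, inv_inv, βα, inv_inv]
  have hinj : ∀ x : X, Function.Injective (hatα x) :=
    fun x => Function.LeftInverse.injective (g := hatβ x) (hba x)
  have hinv : ∀ (x : X) (y : Γ), Function.invFun (hatα x) y = hatβ x y := by
    intro x y
    conv_lhs => rw [← hab x y]
    exact Function.leftInverse_invFun (hinj x) _
  constructor
  · intro g x k
    have h1 : α (k⁻¹ * g) x = α k⁻¹ (T g x) * α g x := coc k⁻¹ g x
    have h2 : α k⁻¹ (T g x) = α (k⁻¹ * g) x * (α g x)⁻¹ := by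
      rw [h1]; group
    rw [hhatα, hhatα, hhatα, h2, inv_inv, mul_inv_rev, inv_inv]
    group
  · intro g x k
    rw [hinv, hhatβ, inv_inv]
    have hb : U g x = T (β g x) x := (hβ g x).symm
    have h1 : α (k⁻¹ * β g x) x = α k⁻¹ (T (β g x) x) * α (β g x) x :=
      coc k⁻¹ (β g x) x
    have h2 : α k⁻¹ (U g x) = α (k⁻¹ * β g x) x * g⁻¹ := by
      rw [hb, h1, αβ]; group
    rw [hhatα, hhatα, h2, mul_inv_rev, inv_inv]
    group

/-- Pointwise form of the four equivariance identities; the inverse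
maps `α̂_x⁻¹`, `β̂_x⁻¹` appearing in the definition of `℧` are expressed via
`Function.invFun` (the orbit-change maps are bijections by Statement 9). -/
theorem statement10 (r : ℕ) (hr : 1 ≤ r) {X : Type*} [Nonempty X]
    (T U : G r → X → X)
    (hT1 : ∀ x, T 1 x = x) (hTmul : ∀ g h x, T (g * h) x = T g (T h x))
    (hU1 : ∀ x, U 1 x = x) (hUmul : ∀ g h x, U (g * h) x = U g (U h x))
    (hTfree : ∀ (g : G r) (x : X), T g x = x → g = 1)
    (hUfree : ∀ (g : G r) (x : X), U g x = x → g = 1)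
    (horb : ∀ x : X, Set.range (fun g => T g x) = Set.range (fun g => U g x))
    (α β : G r → X → G r)
    (hα : ∀ (g : G r) (x : X), U (α g x) x = T g x)
    (hβ : ∀ (g : G r) (x : X), T (β g x) x = U g x)
    (hatα hatβ : X → G r → G r)
    (hhatα : ∀ (x : X) (g : G r), hatα x g = (α g⁻¹ x)⁻¹)
    (hhatβ : ∀ (x : X) (g : G r), hatβ x g = (β g⁻¹ x)⁻¹) :
    -- α̂_{T^g x} = Θ^g α̂_x
    (∀ (g : G r) (x : X) (k : G r),
        hatα (T g x) k = (hatα x g⁻¹)⁻¹ * hatα x (g⁻¹ * k)) ∧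
    -- α̂_{U^g x} = ℧^g α̂_x
    (∀ (g : G r) (x : X) (k : G r),
        hatα (U g x) k = g * hatα x (Function.invFun (hatα x) g⁻¹ * k)) ∧
    -- β̂_{T^g x} = ℧^g β̂_x
    (∀ (g : G r) (x : X) (k : G r),
        hatβ (T g x) k = g * hatβ x (Function.invFun (hatβ x) g⁻¹ * k)) ∧
    -- β̂_{U^g x} = Θ^g β̂_x
    (∀ (g : G r) (x : X) (k : G r),
        hatβ (U g x) k = (hatβ x g⁻¹)⁻¹ * hatβ x (g⁻¹ * k)) := by
  obtain ⟨hA1, hA2⟩ := aux10 T U hT1 hTmul hU1 hUmul hTfree hUfree α β hα hβ hatα hatβ hhatα hhatβ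
  obtain ⟨hB1, hB2⟩ := aux10 U T hU1 hUmul hT1 hTmul hUfree hTfree β α hβ hα hatβ hatα hhatβ hhatα
  exact ⟨hA1, hA2, hB2, hB1⟩

end Stmt10
end

section
/- The map ℰ : sym_e(G) → 𝙰^G is an embedding: (1) it is equivariant, ℰ(Θ^h φ) = h·ℰ(φ) for all h ∈ G and φ ∈ sym_e(G); (2) it is continuous and injective; indeed, if x = ℰ(φ) and s_1, …, s_n ∈ S ∪ S⁻¹ then φ(s_1⋯s_n) = x_e(s_1) x_{s_1}(s_2) x_{s_1 s_2}(s_3) ⋯ x_{s_1⋯s_{n−1}}(s_n). Moreover, for every ρ ∈ ℕ, ℰ(sym_ρ(G)) ⊆ 𝙰_ρ^G, and ℰ restricted to sym_ρ(G) is a homeomorphism onto its image (its inverse ℰ⁻¹ : ℰ(sym_ρ(G)) → sym_e(G) is continuous). -/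
/-
Telescoping `φ(g s) = φ(g) ℰ(φ)_g(s)` along a reduced word shows that `φ` on the ball of
radius `n` is determined by `φ(e) = e` and `ℰ(φ)` on the ball of radius `n - 1`; this gives the
word formula, injectivity, and continuity of `φ ↦ φ(g)` in `ℰ(φ)`. For `φ ∈ sym_ρ(G)` the same
telescoping makes `φ⁻¹` `ρ`-Lipschitz, so `φ⁻¹(g)` lies in the ball of radius `ρ|g|` and is
therefore also determined by `ℰ(φ)` on a finite set: the inverse of `ℰ` is continuous.
-/

namespace Stmt11

abbrev G (r : ℕ) : Type := FreeGroup (Fin r)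

instance (r : ℕ) : TopologicalSpace (G r) := ⊥

def SS (r : ℕ) : Set (G r) :=
  {g | ∃ i : Fin r, g = FreeGroup.of i ∨ g = (FreeGroup.of i)⁻¹}

abbrev A (r : ℕ) : Type := SS r → G r

/-- The topology of pointwise convergence of a bijection together with its inverse. -/
instance (r : ℕ) : TopologicalSpace (Equiv.Perm (G r)) :=
  TopologicalSpace.induced
    (fun φ : Equiv.Perm (G r) => ((φ : G r → G r), (φ.symm : G r → G r))) inferInstance

/-- `sym_e(G)`: bijections of `G` fixing the identity. -/
abbrev symE (r : ℕ) : Type := {φ : Equiv.Perm (G r) // φ 1 = 1}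

def shift (r : ℕ) (g : G r) (x : G r → A r) : G r → A r := fun f => x (g⁻¹ * f)

/-- The action `Θ` of `G` on `sym_e(G)`: `(Θ^h φ)(g) = φ(h⁻¹)⁻¹ φ(h⁻¹ g)`. -/
def theta (r : ℕ) (h : G r) (φ : Equiv.Perm (G r)) : Equiv.Perm (G r) :=
  (Equiv.mulLeft h⁻¹).trans (φ.trans (Equiv.mulLeft (φ h⁻¹)⁻¹))

/-- `ℰ : sym_e(G) → 𝙰^G`, `ℰ(φ)_h(s) = φ(h)⁻¹ φ(h s)`. -/
def E (r : ℕ) (φ : Equiv.Perm (G r)) : G r → A r :=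
  fun h s => (φ h)⁻¹ * φ (h * s.val)

def InSymRho (r ρ : ℕ) (φ : Equiv.Perm (G r)) : Prop :=
  φ 1 = 1 ∧
    ∀ (g s : G r), s ∈ SS r →
      ((φ g)⁻¹ * φ (g * s)).norm ≤ ρ ∧ ((φ.symm g)⁻¹ * φ.symm (g * s)).norm ≤ ρ

/-- The iterated product `x_e(s₁) x_{s₁}(s₂) ⋯ x_{s₁⋯s_{n-1}}(s_n)` (started at `g`). -/
def wordEval (r : ℕ) (x : G r → A r) : G r → List (SS r) → G r
  | _, [] => 1
  | g, s :: l => x g s * wordEval r x (g * s.val) l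

open Topology Filter

instance (r : ℕ) : DiscreteTopology (G r) := ⟨rfl⟩

section

variable {r : ℕ}

lemma SS_eq_range_mk_singleton : SS r = Set.range fun a : Fin r × Bool => FreeGroup.mk [a] := by
  ext g
  constructor
  · rintro ⟨i, rfl | rfl⟩
    · exact ⟨(i, true), rfl⟩
    · exact ⟨(i, false), by simp [FreeGroup.of, FreeGroup.inv_mk, FreeGroup.invRev]⟩
  · rintro ⟨⟨i, _ | _⟩, rfl⟩
    · exact ⟨i, .inr (by simp [FreeGroup.of, FreeGroup.inv_mk, FreeGroup.invRev])⟩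
    · exact ⟨i, .inl rfl⟩

instance : Finite (SS r) := SS_eq_range_mk_singleton ▸ Set.finite_range _

lemma exists_eq_mul_of_norm_le_succ {n : ℕ} {g : G r} (hg : g.norm ≤ n + 1) :
    g.norm ≤ n ∨ ∃ g' : G r, g'.norm ≤ n ∧ ∃ s : SS r, g = g' * s := by
  refine or_iff_not_imp_left.mpr fun hgn => ?_
  obtain ⟨w, a, hw⟩ := (g.toWord.eq_nil_or_concat).resolve_left
    fun h => hgn (by simp [FreeGroup.norm, h])
  have hlen : w.length = n := by
    have : g.toWord.length = n + 1 := by unfold FreeGroup.norm at hg hgn; omega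
    simpa [hw] using this
  refine ⟨FreeGroup.mk w, hlen ▸ FreeGroup.norm_mk_le,
    ⟨_, SS_eq_range_mk_singleton ▸ Set.mem_range_self a⟩, ?_⟩
  rw [FreeGroup.mul_mk, ← List.concat_eq_append, ← hw, FreeGroup.mk_toWord]

lemma finite_setOf_norm_lt (n : ℕ) : {g : G r | g.norm < n}.Finite :=
  ((List.finite_length_le _ n).preimage FreeGroup.toWord_injective.injOn).subset
    fun g (hg : g.norm < n) => show g.toWord.length ≤ n from hg.le

lemma E_theta (h : G r) (φ : Equiv.Perm (G r)) : E r (theta r h φ) = shift r h (E r φ) := by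
  funext g s
  simp only [E, theta, shift, Equiv.trans_apply, Equiv.coe_mulLeft]
  group

lemma apply_mul_eq_mul_E (φ : Equiv.Perm (G r)) (g : G r) (s : SS r) :
    φ (g * s) = φ g * E r φ g s := by
  simp [E]

lemma mul_wordEval_E (φ : Equiv.Perm (G r)) :
    ∀ (l : List (SS r)) (g : G r),
      φ g * wordEval r (E r φ) g l = φ (g * (l.map Subtype.val).prod)
  | [], g => by simp [wordEval]
  | s :: l, g => by
    rw [wordEval, ← mul_assoc, ← apply_mul_eq_mul_E, mul_wordEval_E φ l, List.map_cons,
      List.prod_cons, mul_assoc]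

lemma apply_prod_eq_wordEval {φ : Equiv.Perm (G r)} (hφ : φ 1 = 1) (l : List (SS r)) :
    φ (l.map Subtype.val).prod = wordEval r (E r φ) 1 l := by
  simpa [hφ] using (mul_wordEval_E φ l 1).symm

lemma apply_eq_of_E_eq {φ ψ : Equiv.Perm (G r)} (h1 : φ 1 = ψ 1) {n : ℕ}
    (hE : ∀ h : G r, h.norm < n → E r φ h = E r ψ h) {g : G r} (hg : g.norm ≤ n) :
    φ g = ψ g := by
  induction n generalizing g with
  | zero => rwa [FreeGroup.norm_eq_zero.mp (Nat.le_zero.mp hg)]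
  | succ n ih =>
    have ih' : ∀ {g : G r}, g.norm ≤ n → φ g = ψ g := ih fun h hh => hE h (by omega)
    obtain hg | ⟨g', hg', s, rfl⟩ := exists_eq_mul_of_norm_le_succ hg
    · exact ih' hg
    · rw [apply_mul_eq_mul_E, apply_mul_eq_mul_E, ih' hg', hE g' (by omega)]

lemma E_injOn : Set.InjOn (E r) {φ | φ 1 = 1} := fun _ hφ _ hψ h =>
  Equiv.ext fun _ => apply_eq_of_E_eq (hφ.trans hψ.symm) (fun k _ => congrFun h k) le_rfl

lemma norm_apply_le_mul_norm {f : G r → G r} (hf : f 1 = 1) {ρ : ℕ}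
    (hstep : ∀ g, ∀ s ∈ SS r, ((f g)⁻¹ * f (g * s)).norm ≤ ρ) (g : G r) :
    (f g).norm ≤ ρ * g.norm := by
  suffices ∀ n, ∀ g : G r, g.norm ≤ n → (f g).norm ≤ ρ * n from this _ g le_rfl
  intro n
  induction n with
  | zero => intro g hg; simp [FreeGroup.norm_eq_zero.mp (Nat.le_zero.mp hg), hf]
  | succ n ih =>
    intro g hg
    obtain hg | ⟨g', hg', s, rfl⟩ := exists_eq_mul_of_norm_le_succ hg
    · exact (ih g hg).trans (by gcongr; omega)
    calc (f (g' * s)).norm = (f g' * ((f g')⁻¹ * f (g' * s))).norm := by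
          rw [mul_inv_cancel_left]
      _ ≤ (f g').norm + ((f g')⁻¹ * f (g' * s)).norm := FreeGroup.norm_mul_le _ _
      _ ≤ ρ * n + ρ := add_le_add (ih g' hg') (hstep g' s s.2)
      _ = ρ * (n + 1) := by ring

lemma continuous_E : Continuous (E r) := by
  have hpair : Continuous fun φ : Equiv.Perm (G r) => ((φ : G r → G r), (φ.symm : G r → G r)) :=
    continuous_induced_dom
  have hcoe := hpair.fst
  exact continuous_pi fun h => continuous_pi fun s =>
    ((continuous_apply h).comp hcoe).inv.mul ((continuous_apply _).comp hcoe)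

lemma eventually_nhds_forall_norm_lt_eq (x : G r → A r) (n : ℕ) :
    ∀ᶠ y in 𝓝 x, ∀ h : G r, h.norm < n → y h = x h :=
  (finite_setOf_norm_lt n).eventually_all.mpr fun h _ =>
    (continuous_apply h).continuousAt.eventually_mem ((isOpen_discrete {x h}).mem_nhds rfl)

lemma isInducing_E_symRho (ρ : ℕ) :
    IsInducing fun φ : {φ : Equiv.Perm (G r) // InSymRho r ρ φ} => E r φ.val := by
  refine isInducing_iff_nhds.mpr fun φ => le_antisymm
    ((continuous_E.comp continuous_subtype_val).tendsto φ).le_comap ?_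
  rw [nhds_induced Subtype.val, nhds_induced, comap_comap, ← tendsto_iff_comap]
  have hnear := fun n => (eventually_nhds_forall_norm_lt_eq (E r φ.val) n).comap
    fun ψ : {φ : Equiv.Perm (G r) // InSymRho r ρ φ} => E r ψ.val
  refine .prodMk_nhds (tendsto_pi_nhds.mpr fun g => ?_) (tendsto_pi_nhds.mpr fun g => ?_) <;>
    rw [nhds_discrete (G r), tendsto_pure]
  · exact (hnear g.norm).mono fun ψ hψ =>
      apply_eq_of_E_eq (ψ.2.1.trans φ.2.1.symm) hψ le_rfl
  · have hsymm1 : φ.val.symm 1 = 1 := by rw [Equiv.symm_apply_eq, φ.2.1]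
    have hk := norm_apply_le_mul_norm hsymm1 (fun h s hs => (φ.2.2 h s hs).2) g
    refine (hnear (ρ * g.norm)).mono fun ψ hψ => ?_
    rw [Equiv.symm_apply_eq,
      apply_eq_of_E_eq (ψ.2.1.trans φ.2.1.symm) hψ hk, Equiv.apply_symm_apply]

end

theorem statement11_general (r ρ : ℕ) :
    (∀ (h : G r) (φ : Equiv.Perm (G r)), φ 1 = 1 →
        E r (theta r h φ) = shift r h (E r φ)) ∧
    Continuous (fun φ : symE r => E r φ.val) ∧
    Function.Injective (fun φ : symE r => E r φ.val) ∧
    (∀ (φ : Equiv.Perm (G r)), φ 1 = 1 → ∀ l : List (SS r),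
        φ ((l.map Subtype.val).prod) = wordEval r (E r φ) 1 l) ∧
    (∀ φ : Equiv.Perm (G r), InSymRho r ρ φ →
        ∀ (g : G r) (s : SS r), ((E r φ) g s).norm ≤ ρ) ∧
    Topology.IsEmbedding
      (fun φ : {φ : Equiv.Perm (G r) // InSymRho r ρ φ} => E r φ.val) := by
  refine ⟨fun h φ _ => E_theta h φ, continuous_E.comp continuous_subtype_val, ?_,
    fun φ hφ => apply_prod_eq_wordEval hφ, fun φ hφ g s => (hφ.2 g s s.2).1,
    isInducing_E_symRho ρ, ?_⟩
  · exact fun φ ψ h => Subtype.ext (E_injOn φ.2 ψ.2 h)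
  · exact fun φ ψ h => Subtype.ext (E_injOn φ.2.1 ψ.2.1 h)

/-- `ℰ` is an embedding:  (1) equivariant, `ℰ(Θ^h φ) = h·ℰ(φ)`;
(2) continuous and injective on `sym_e(G)`, with
`φ(s₁⋯s_n) = x_e(s₁) x_{s₁}(s₂) ⋯ x_{s₁⋯s_{n-1}}(s_n)` for `x = ℰ(φ)`;
moreover `ℰ(sym_ρ(G)) ⊆ 𝙰_ρ^G`, and `ℰ` restricted to `sym_ρ(G)` is a homeomorphism
onto its image. -/
theorem statement11 (r ρ : ℕ) (hr : 1 ≤ r) :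
    (∀ (h : G r) (φ : Equiv.Perm (G r)), φ 1 = 1 →
        E r (theta r h φ) = shift r h (E r φ)) ∧
    Continuous (fun φ : symE r => E r φ.val) ∧
    Function.Injective (fun φ : symE r => E r φ.val) ∧
    (∀ (φ : Equiv.Perm (G r)), φ 1 = 1 → ∀ l : List (SS r),
        φ ((l.map Subtype.val).prod) = wordEval r (E r φ) 1 l) ∧
    (∀ φ : Equiv.Perm (G r), InSymRho r ρ φ →
        ∀ (g : G r) (s : SS r), ((E r φ) g s).norm ≤ ρ) ∧
    Topology.IsEmbedding
      (fun φ : {φ : Equiv.Perm (G r) // InSymRho r ρ φ} => E r φ.val) :=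
  statement11_general r ρ

end Stmt11
end

section
/- For every ρ ∈ ℕ, the set ℰ(sym_ρ(G)) ⊆ 𝙰_ρ^G is a subshift of finite type: it is closed and shift-invariant, and there exists a finite collection 𝒲 of maps w : D_w → 𝙰_ρ, with each domain D_w contained in the finite ball B(e, ρ²+1), such that ℰ(sym_ρ(G)) = {x ∈ 𝙰_ρ^G : for every g ∈ G and every w ∈ 𝒲, the restriction of g·x to D_w is not equal to w}. -/
/- Theorem (T:SFT1): ℰ(sym_ρ(G)) ⊆ 𝙰_ρ^G is a subshift of finite type. -/

namespace Stmt13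

abbrev G (r : ℕ) : Type := FreeGroup (Fin r)

instance (r : ℕ) : TopologicalSpace (G r) := ⊥

def SS (r : ℕ) : Set (G r) :=
  {g | ∃ i : Fin r, g = FreeGroup.of i ∨ g = (FreeGroup.of i)⁻¹}

/-- The alphabet `𝙰 = G^{S∪S⁻¹}` (with the product of discrete topologies). -/
abbrev A (r : ℕ) : Type := SS r → G r

/-- The ball `B(e,ρ)` in `G`. -/
def ball (r ρ : ℕ) : Set (G r) := {g | g.norm ≤ ρ}

/-- `𝙰_ρ^G` viewed as a subset of `𝙰^G`: all configurations whose letters take values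
in `𝙰_ρ = B(e,ρ)^{S∪S⁻¹}`. -/
def ARhoG (r ρ : ℕ) : Set (G r → A r) := {x | ∀ (g : G r) (s : SS r), (x g s).norm ≤ ρ}

/-- The left shift action of `G` on `𝙰^G`: `(g·x)(f) = x(g⁻¹ f)`. -/
def shift (r : ℕ) (g : G r) (x : G r → A r) : G r → A r := fun f => x (g⁻¹ * f)

/-- `ℰ : sym_e(G) → 𝙰^G`, `ℰ(φ)_h(s) = φ(h)⁻¹ φ(h s)`. -/
def E (r : ℕ) (φ : Equiv.Perm (G r)) : G r → A r :=
  fun h s => (φ h)⁻¹ * φ (h * s.val)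

def InSymRho (r ρ : ℕ) (φ : Equiv.Perm (G r)) : Prop :=
  φ 1 = 1 ∧
    ∀ (g s : G r), s ∈ SS r →
      ((φ g)⁻¹ * φ (g * s)).norm ≤ ρ ∧ ((φ.symm g)⁻¹ * φ.symm (g * s)).norm ≤ ρ

/-- The image `ℰ(sym_ρ(G))`. -/
def EImage (r ρ : ℕ) : Set (G r → A r) :=
  {x | ∃ φ : Equiv.Perm (G r), InSymRho r ρ φ ∧ E r φ = x}


/-! ### Letters -/

variable {r ρ : ℕ}

open FreeGroup

/-- The group element corresponding to a letter. -/
def lt (t : Fin r × Bool) : G r := FreeGroup.mk [t]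

/-- The inverse letter. -/
def tinv (t : Fin r × Bool) : Fin r × Bool := (t.1, !t.2)

lemma lt_tinv (t : Fin r × Bool) : lt (tinv t) = (lt t)⁻¹ := by
  rw [lt, lt, inv_mk]; rfl

lemma lt_mem_SS (t : Fin r × Bool) : lt t ∈ SS r := by
  refine ⟨t.1, ?_⟩
  rcases t with ⟨i, b⟩
  cases b
  · right
    show (FreeGroup.of i : G r)⁻¹ = FreeGroup.mk [(i, false)]
    rw [show (FreeGroup.of i : G r) = FreeGroup.mk [(i,true)] from rfl, inv_mk]; rfl
  · left; rfl

def ltS (t : Fin r × Bool) : SS r := ⟨lt t, lt_mem_SS t⟩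

lemma norm_lt (t : Fin r × Bool) : (lt t).norm = 1 := by
  simp [lt, FreeGroup.norm, toWord_mk, reduce_singleton]

lemma inv_mem_SS {s : G r} (h : s ∈ SS r) : s⁻¹ ∈ SS r := by
  obtain ⟨i, h | h⟩ := h
  · exact ⟨i, Or.inr (by rw [h])⟩
  · exact ⟨i, Or.inl (by rw [h, inv_inv])⟩

def sinv (s : SS r) : SS r := ⟨s.val⁻¹, inv_mem_SS s.2⟩

lemma SS_eq_lt (s : SS r) : ∃ t, s.val = lt t := by
  obtain ⟨i, h | h⟩ := s.2
  · exact ⟨(i, true), h⟩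
  · refine ⟨(i, false), ?_⟩
    rw [h, show (FreeGroup.of i : G r) = FreeGroup.mk [(i,true)] from rfl, inv_mk]; rfl

lemma norm_SS (s : SS r) : (s.val).norm = 1 := by
  obtain ⟨t, ht⟩ := SS_eq_lt s
  rw [ht, norm_lt]

/-! ### Reduced-word dichotomy -/

/-- Tails of reduced words are reduced. -/
lemma reduce_tail {x : Fin r × Bool} {l : List (Fin r × Bool)}
    (h : reduce (x :: l) = x :: l) : reduce l = l := by
  have hc := FreeGroup.reduce.cons (L := l) x
  rcases hl : reduce l with _ | ⟨y, ys⟩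
  · rw [hl] at hc
    simp only [hc] at h
    have : l = [] := by simpa using congrArg List.tail h
    rw [this]
  · rw [hl] at hc
    change reduce (x :: l) = if x.1 = y.1 ∧ x.2 = !y.2 then ys else x :: y :: ys at hc
    by_cases hcan : x.1 = y.1 ∧ x.2 = !y.2
    · rw [if_pos hcan] at hc
      rw [h] at hc
      have h1 : (reduce l).length ≤ l.length := FreeGroup.Red.length_le (FreeGroup.reduce.red)
      rw [hl] at h1
      rw [← hc] at h1
      simp at h1
    · rw [if_neg hcan] at hc
      rw [h] at hc
      have : l = y :: ys := by simpa using congrArg List.tail hc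
      exact this.symm

lemma not_cancel_of_reduced {x y : Fin r × Bool} {w : List (Fin r × Bool)}
    (h : reduce (x :: y :: w) = x :: y :: w) : ¬(x.1 = y.1 ∧ x.2 = !y.2) := by
  intro hcan
  have hw : reduce (y :: w) = y :: w := reduce_tail h
  have hc := FreeGroup.reduce.cons (L := y :: w) x
  rw [hw] at hc
  change reduce (x :: y :: w) = if x.1 = y.1 ∧ x.2 = !y.2 then w else x :: y :: w at hc
  rw [if_pos hcan, h] at hc
  have := congrArg List.length hc
  simp at this
  omega

lemma reduce_append (t : Fin r × Bool) : ∀ (w : List (Fin r × Bool)), reduce w = w →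
    reduce (w ++ [t]) = w ++ [t] ∨
      (∃ w₀, w = w₀ ++ [tinv t] ∧ reduce (w ++ [t]) = w₀) := by
  intro w
  induction w with
  | nil => intro _; left; exact reduce_singleton t
  | cons x w ih =>
    intro hw
    have hw' : reduce w = w := reduce_tail hw
    have hc := FreeGroup.reduce.cons (L := w ++ [t]) x
    rcases ih hw' with hred | ⟨w₀, hw₀, hred⟩
    · rw [hred] at hc
      cases w with
      | nil =>
        change reduce ([x] ++ [t]) = if x.1 = t.1 ∧ x.2 = !t.2 then [] else x :: t :: [] at hc
        by_cases hcan : x.1 = t.1 ∧ x.2 = !t.2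
        · right
          refine ⟨[], ?_, ?_⟩
          · have : x = tinv t := Prod.ext hcan.1 (by rw [hcan.2]; rfl)
            rw [this]; rfl
          · rw [hc, if_pos hcan]
        · left
          rw [hc, if_neg hcan]; rfl
      | cons y w' =>
        change reduce ((x :: y :: w') ++ [t])
            = if x.1 = y.1 ∧ x.2 = !y.2 then w' ++ [t] else x :: y :: (w' ++ [t]) at hc
        rw [if_neg (not_cancel_of_reduced hw)] at hc
        left
        rw [hc]; rfl
    · rw [hred] at hc
      cases w₀ with
      | nil =>
        change reduce ((x :: w) ++ [t]) = [x] at hc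
        right
        exact ⟨[x], by rw [hw₀]; rfl, hc⟩
      | cons z zs =>
        change reduce ((x :: w) ++ [t])
            = if x.1 = z.1 ∧ x.2 = !z.2 then zs else x :: z :: zs at hc
        have hwz : w = z :: (zs ++ [tinv t]) := by rw [hw₀]; rfl
        have hnc : ¬(x.1 = z.1 ∧ x.2 = !z.2) := by
          have := hw; rw [hwz] at this
          exact not_cancel_of_reduced this
        rw [if_neg hnc] at hc
        right
        exact ⟨x :: z :: zs, by rw [hw₀]; rfl, hc⟩

lemma toWord_dichotomy (k : G r) (t : Fin r × Bool) :
    (k * lt t).toWord = k.toWord ++ [t] ∨ k.toWord = (k * lt t).toWord ++ [tinv t] := by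
  have h1 : k * lt t = FreeGroup.mk (k.toWord ++ [t]) := by
    conv_lhs => rw [← mk_toWord (x := k)]
    rw [lt, mul_mk]
  have h2 : (k * lt t).toWord = reduce (k.toWord ++ [t]) := by rw [h1, toWord_mk]
  rcases reduce_append t k.toWord (reduce_toWord k) with h | ⟨w₀, hw₀, h⟩
  · left; rw [h2, h]
  · right; rw [h2, h, ← hw₀]

/-! ### Path products -/

def pathProd (x : G r → A r) : G r → List (Fin r × Bool) → G r
  | _, [] => 1
  | g, t :: l => x g (ltS t) * pathProd x (g * lt t) l

def Phi (x : G r → A r) (g h : G r) : G r := pathProd x g h.toWord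

lemma pathProd_congr {x y : G r → A r} :
    ∀ (l : List (Fin r × Bool)) (g : G r),
      (∀ f : G r, (g⁻¹ * f).norm ≤ l.length → x f = y f) →
      pathProd x g l = pathProd y g l := by
  intro l
  induction l with
  | nil => intro g _; rfl
  | cons t l ih =>
    intro g hxy
    have hg : x g = y g := hxy g (by simp)
    have hrec : pathProd x (g * lt t) l = pathProd y (g * lt t) l := by
      apply ih
      intro f hf
      apply hxy
      calc (g⁻¹ * f).norm = ((lt t) * ((g * lt t)⁻¹ * f)).norm := by group
        _ ≤ (lt t).norm + ((g * lt t)⁻¹ * f).norm := FreeGroup.norm_mul_le _ _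
        _ ≤ 1 + l.length := by rw [norm_lt]; omega
        _ = (t :: l).length := by simp [add_comm]
    simp only [pathProd, hg, hrec]

lemma pathProd_transl (x : G r → A r) (g : G r) :
    ∀ (l : List (Fin r × Bool)) (g' : G r),
      pathProd (fun f => x (g * f)) g' l = pathProd x (g * g') l := by
  intro l
  induction l with
  | nil => intro g'; rfl
  | cons t l ih =>
    intro g'
    simp only [pathProd, ih (g' * lt t), mul_assoc]

lemma norm_pathProd {x : G r → A r} (hx : x ∈ ARhoG r ρ) :
    ∀ (l : List (Fin r × Bool)) (g : G r), (pathProd x g l).norm ≤ ρ * l.length := by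
  intro l
  induction l with
  | nil => intro g; simp [pathProd, FreeGroup.norm_one]
  | cons t l ih =>
    intro g
    calc (pathProd x g (t :: l)).norm
        ≤ (x g (ltS t)).norm + (pathProd x (g * lt t) l).norm := FreeGroup.norm_mul_le _ _
      _ ≤ ρ + ρ * l.length := add_le_add (hx g (ltS t)) (ih (g * lt t))
      _ = ρ * (t :: l).length := by simp [Nat.mul_succ, Nat.add_comm]

lemma Phi_one (x : G r → A r) (g : G r) : Phi x g 1 = 1 := by
  simp [Phi, toWord_one, pathProd]

lemma Phi_lt (x : G r → A r) (g : G r) (t : Fin r × Bool) :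
    Phi x g (lt t) = x g (ltS t) := by
  have : (lt t : G r).toWord = [t] := by rw [lt, toWord_mk, reduce_singleton]
  simp [Phi, this, pathProd]

lemma norm_Phi {x : G r → A r} (hx : x ∈ ARhoG r ρ) (g h : G r) :
    (Phi x g h).norm ≤ ρ * h.norm := norm_pathProd hx h.toWord g

lemma Phi_transl (x : G r → A r) (g h : G r) :
    Phi (fun f => x (g * f)) 1 h = Phi x g h := by
  rw [Phi, Phi, pathProd_transl, mul_one]

/-! ### The cocycle property, via permutations of `G × G` -/

def C1 (x : G r → A r) : Prop := ∀ (g : G r) (s : SS r), x g s * x (g * s.val) (sinv s) = 1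

/-- The step permutation of `G × G` associated to a letter. -/
def stepEquiv (x : G r → A r) (t : Fin r × Bool) : Equiv.Perm (G r × G r) where
  toFun p := (p.1 * lt t, p.2 * x p.1 (ltS t))
  invFun p := (p.1 * (lt t)⁻¹, p.2 * (x (p.1 * (lt t)⁻¹) (ltS t))⁻¹)
  left_inv p := by simp
  right_inv p := by simp

noncomputable def theta (x : G r → A r) : G r →* Equiv.Perm (G r × G r) :=
  FreeGroup.lift (fun i => (stepEquiv x (i, true)).symm)

noncomputable def act (x : G r → A r) (h : G r) : Equiv.Perm (G r × G r) := theta x h⁻¹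

lemma act_mul (x : G r → A r) (h₁ h₂ : G r) (p : G r × G r) :
    act x (h₁ * h₂) p = act x h₂ (act x h₁ p) := by
  simp [act, mul_inv_rev, map_mul, Equiv.Perm.mul_apply]

lemma act_lt_true (x : G r → A r) (i : Fin r) (p : G r × G r) :
    act x (lt (i, true)) p = (p.1 * lt (i, true), p.2 * x p.1 (ltS (i, true))) := by
  have h1 : (lt (i, true) : G r) = FreeGroup.of i := rfl
  have : theta x (FreeGroup.of i) = (stepEquiv x (i, true)).symm := FreeGroup.lift_apply_of
  have h2 : theta x ((FreeGroup.of i : G r)⁻¹) = (theta x (FreeGroup.of i))⁻¹ :=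
    map_inv (theta x) _
  rw [act, h1, h2, this]
  simp [stepEquiv, Equiv.Perm.inv_def, h1]

lemma act_lt_false {x : G r → A r} (hx : C1 x) (i : Fin r) (p : G r × G r) :
    act x (lt (i, false)) p = (p.1 * lt (i, false), p.2 * x p.1 (ltS (i, false))) := by
  have hinv : (lt (i, false) : G r) = (lt (i, true))⁻¹ := by rw [← lt_tinv (i, true)]; rfl
  have hof : theta x (lt ((i, true) : Fin r × Bool)) = (stepEquiv x (i, true)).symm :=
    FreeGroup.lift_apply_of
  have h0 : ((lt (i, false) : G r))⁻¹ = lt (i, true) := by rw [hinv, inv_inv]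
  rw [act, h0, hof]
  have hC := hx (p.1 * lt (i, false)) (ltS (i, true))
  have hval : p.1 * lt (i, false) * lt (i, true) = p.1 := by rw [hinv]; group
  have hsinv : sinv (ltS ((i, true) : Fin r × Bool)) = ltS (i, false) := by
    apply Subtype.ext
    show (lt ((i, true) : Fin r × Bool))⁻¹ = lt (i, false)
    rw [hinv]
  rw [show ((ltS ((i, true) : Fin r × Bool)) : G r) = lt (i, true) from rfl] at hC
  rw [hval, hsinv] at hC
  have h2 : (x (p.1 * lt (i, false)) (ltS (i, true)))⁻¹ = x p.1 (ltS (i, false)) :=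
    inv_eq_of_mul_eq_one_right hC
  show (stepEquiv x (i, true)).symm p = _
  simp only [stepEquiv, Equiv.coe_fn_symm_mk]
  rw [← hinv, h2]

lemma act_eq {x : G r → A r} (hx : C1 x) :
    ∀ (l : List (Fin r × Bool)) (p : G r × G r),
      act x (FreeGroup.mk l) p = (p.1 * FreeGroup.mk l, p.2 * pathProd x p.1 l) := by
  intro l
  induction l with
  | nil =>
    intro p
    have h1 : (FreeGroup.mk [] : G r) = 1 := FreeGroup.one_eq_mk.symm
    simp [h1, act, pathProd]
  | cons t l ih =>
    intro p
    have h1 : (FreeGroup.mk (t :: l) : G r) = lt t * FreeGroup.mk l := by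
      rw [lt, mul_mk]; rfl
    have hstep : act x (lt t) p = (p.1 * lt t, p.2 * x p.1 (ltS t)) := by
      rcases t with ⟨i, b⟩
      cases b
      · exact act_lt_false hx i p
      · exact act_lt_true x i p
    rw [h1, act_mul, hstep, ih]
    simp only [pathProd, Prod.mk.injEq]
    constructor
    · rw [mul_assoc]
    · rw [mul_assoc]

lemma act_eval {x : G r → A r} (hx : C1 x) (h : G r) (p : G r × G r) :
    act x h p = (p.1 * h, p.2 * Phi x p.1 h) := by
  conv_lhs => rw [← mk_toWord (x := h)]
  rw [act_eq hx]
  rw [mk_toWord]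
  rfl

/-! ### The map `φ` and its cocycle property -/

def phiOf (x : G r → A r) : G r → G r := Phi x 1

lemma Phi_mul {x : G r → A r} (hx : C1 x) (g h₁ h₂ : G r) :
    Phi x g (h₁ * h₂) = Phi x g h₁ * Phi x (g * h₁) h₂ := by
  have h1 := act_eval hx (h₁ * h₂) (g, 1)
  have h2 := act_eval hx h₂ (act x h₁ (g, 1))
  rw [← act_mul, h1, act_eval hx h₁ (g, 1)] at h2
  have := congrArg Prod.snd h2
  simpa using this

lemma Phi_eq {x : G r → A r} (hx : C1 x) (g h : G r) :
    Phi x g h = (phiOf x g)⁻¹ * phiOf x (g * h) := by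
  have := Phi_mul hx 1 g h
  rw [one_mul] at this
  simp only [phiOf]
  rw [this]
  group

lemma phiOf_mul {x : G r → A r} (hx : C1 x) (g h : G r) :
    phiOf x (g * h) = phiOf x g * Phi x g h := by
  rw [Phi_eq hx]; group

lemma phiOf_one (x : G r → A r) : phiOf x 1 = 1 := Phi_one x 1

lemma Phi_SS (x : G r → A r) (g : G r) (s : SS r) : Phi x g s.val = x g s := by
  obtain ⟨t, ht⟩ := SS_eq_lt s
  have hts : ltS t = s := Subtype.ext ht.symm
  rw [ht, Phi_lt, hts]

/-! ### Conditions C2, C3 and the inverse map ψ -/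

def C2 (ρ : ℕ) (x : G r → A r) : Prop :=
  ∀ (g : G r) (s : SS r), ∃ h : G r, h.norm ≤ ρ ∧ Phi x g h = s.val

def C3 (ρ : ℕ) (x : G r → A r) : Prop :=
  ∀ (g h : G r), h.norm ≤ ρ ^ 2 + 1 → Phi x g h = 1 → h = 1

lemma two_rho_le : 2 * ρ ≤ ρ ^ 2 + 1 := by nlinarith [Nat.zero_le ρ]

lemma loc_inj {x : G r → A r} (h1 : C1 x) (h3 : C3 ρ x) {a b : G r}
    (hab : phiOf x a = phiOf x b) (hn : (a⁻¹ * b).norm ≤ ρ ^ 2 + 1) : a = b := by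
  have hPhi : Phi x a (a⁻¹ * b) = 1 := by
    rw [Phi_eq h1, mul_inv_cancel_left, hab, inv_mul_cancel]
  have := h3 a (a⁻¹ * b) hn hPhi
  have : b = a * 1 := by rw [← this]; group
  rw [this, mul_one]

noncomputable def hch {x : G r → A r} (h2 : C2 ρ x) (g : G r) (s : SS r) : G r :=
  (h2 g s).choose

lemma hch_norm {x : G r → A r} (h2 : C2 ρ x) (g : G r) (s : SS r) :
    (hch h2 g s).norm ≤ ρ := (h2 g s).choose_spec.1

lemma hch_phi {x : G r → A r} (h2 : C2 ρ x) (g : G r) (s : SS r) :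
    Phi x g (hch h2 g s) = s.val := (h2 g s).choose_spec.2

noncomputable def psiRev {x : G r → A r} (h2 : C2 ρ x) : List (Fin r × Bool) → G r
  | [] => 1
  | t :: m => psiRev h2 m * hch h2 (psiRev h2 m) (ltS t)

noncomputable def psi {x : G r → A r} (h2 : C2 ρ x) (k : G r) : G r :=
  psiRev h2 k.toWord.reverse

lemma phi_psiRev {x : G r → A r} (h1 : C1 x) (h2 : C2 ρ x) :
    ∀ m : List (Fin r × Bool), phiOf x (psiRev h2 m) = FreeGroup.mk m.reverse := by
  intro m
  induction m with
  | nil =>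
    show phiOf x 1 = FreeGroup.mk []
    rw [phiOf_one, FreeGroup.one_eq_mk]
  | cons t m ih =>
    show phiOf x (psiRev h2 m * hch h2 (psiRev h2 m) (ltS t)) = _
    rw [phiOf_mul h1, hch_phi, ih]
    show FreeGroup.mk m.reverse * lt t = FreeGroup.mk (t :: m).reverse
    rw [lt, mul_mk, List.reverse_cons]

lemma phi_psi {x : G r → A r} (h1 : C1 x) (h2 : C2 ρ x) (k : G r) :
    phiOf x (psi h2 k) = k := by
  rw [psi, phi_psiRev h1 h2, List.reverse_reverse, mk_toWord]

lemma psi_step {x : G r → A r} (h1 : C1 x) (h2 : C2 ρ x) (h3 : C3 ρ x) (k : G r)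
    (t : Fin r × Bool) :
    psi h2 (k * lt t) = psi h2 k * hch h2 (psi h2 k) (ltS t) := by
  rcases toWord_dichotomy k t with hd | hd
  · rw [psi, hd, List.reverse_append, List.reverse_singleton, List.singleton_append]
    show psiRev h2 (t :: k.toWord.reverse) = _
    rfl
  · have hpk : psi h2 k = psi h2 (k * lt t) * hch h2 (psi h2 (k * lt t)) (ltS (tinv t)) := by
      show psiRev h2 k.toWord.reverse = _
      rw [hd, List.reverse_append, List.reverse_singleton, List.singleton_append]
      rfl
    set g2 := psi h2 (k * lt t) with hg2def
    set h := hch h2 g2 (ltS (tinv t)) with hhdef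
    set h' := hch h2 (psi h2 k) (ltS t) with hh'def
    have hg2 : phiOf x g2 = k * lt t := phi_psi h1 h2 _
    have hφk : phiOf x (psi h2 k) = k := phi_psi h1 h2 _
    have hPhih' : Phi x (psi h2 k) h' = lt t := hch_phi h2 _ _
    have key : phiOf x (g2 * (h * h')) = phiOf x g2 := by
      rw [← mul_assoc, ← hpk, phiOf_mul h1, hPhih', hφk, hg2]
    have hn : (h * h').norm ≤ ρ ^ 2 + 1 := by
      calc (h * h').norm ≤ h.norm + h'.norm := FreeGroup.norm_mul_le _ _
        _ ≤ ρ + ρ := add_le_add (hch_norm h2 _ _) (hch_norm h2 _ _)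
        _ ≤ ρ ^ 2 + 1 := by have := two_rho_le (ρ := ρ); omega
    have hone : g2 = g2 * (h * h') := loc_inj h1 h3 key.symm (by
      have harr : g2⁻¹ * (g2 * (h * h')) = h * h' := by group
      rw [harr]
      exact hn)
    have hhh' : h * h' = 1 :=
      mul_left_cancel (a := g2) (show g2 * (h * h') = g2 * 1 by rw [mul_one]; exact hone.symm)
    calc g2 = g2 * (h * h') := by rw [hhh', mul_one]
      _ = psi h2 k * h' := by rw [← mul_assoc, ← hpk]

lemma psi_walk {x : G r → A r} (h1 : C1 x) (h2 : C2 ρ x) (h3 : C3 ρ x) :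
    ∀ (m : List (Fin r × Bool)) (k : G r),
      ∃ u : G r, psi h2 (k * FreeGroup.mk m) = psi h2 k * u ∧ u.norm ≤ ρ * m.length := by
  intro m
  induction m with
  | nil =>
    intro k
    refine ⟨1, ?_, by simp [FreeGroup.norm_one]⟩
    rw [← FreeGroup.one_eq_mk, mul_one, mul_one]
  | cons t m ih =>
    intro k
    have hsplit : (FreeGroup.mk (t :: m) : G r) = lt t * FreeGroup.mk m := by
      rw [lt, mul_mk]; rfl
    obtain ⟨u', hu', hn'⟩ := ih (k * lt t)
    refine ⟨hch h2 (psi h2 k) (ltS t) * u', ?_, ?_⟩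
    · rw [hsplit, ← mul_assoc, hu', psi_step h1 h2 h3, mul_assoc]
    · calc (hch h2 (psi h2 k) (ltS t) * u').norm
          ≤ (hch h2 (psi h2 k) (ltS t)).norm + u'.norm := FreeGroup.norm_mul_le _ _
        _ ≤ ρ + ρ * m.length := add_le_add (hch_norm h2 _ _) hn'
        _ = ρ * (t :: m).length := by simp [Nat.mul_succ, Nat.add_comm]

lemma psi_phi {x : G r → A r} (hA : x ∈ ARhoG r ρ) (h1 : C1 x) (h2 : C2 ρ x) (h3 : C3 ρ x)
    (g : G r) : psi h2 (phiOf x g) = g := by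
  have main : ∀ l : List (Fin r × Bool), psi h2 (phiOf x (FreeGroup.mk l)) = FreeGroup.mk l := by
    intro l
    induction l using List.reverseRecOn with
    | nil =>
      rw [← FreeGroup.one_eq_mk, phiOf_one]
      show psiRev h2 (FreeGroup.toWord (1 : G r)).reverse = 1
      rw [toWord_one]
      rfl
    | append_singleton l t ih =>
      have hsplit : (FreeGroup.mk (l ++ [t]) : G r) = FreeGroup.mk l * lt t := by
        rw [lt, mul_mk]
      set a := (FreeGroup.mk l : G r) with ha
      have hc_norm : (Phi x a (lt t)).norm ≤ ρ := by rw [Phi_lt]; exact hA a (ltS t)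
      have hφ : phiOf x (a * lt t) = phiOf x a * Phi x a (lt t) := phiOf_mul h1 a (lt t)
      obtain ⟨u, hu, hun⟩ := psi_walk h1 h2 h3 (Phi x a (lt t)).toWord (phiOf x a)
      rw [mk_toWord] at hu
      have heq1 : psi h2 (phiOf x (a * lt t)) = a * u := by rw [hφ, hu, ih]
      have heq2 : phiOf x (a * u) = phiOf x (a * lt t) := by
        have hh := phi_psi h1 h2 (phiOf x a * Phi x a (lt t))
        rw [hu, ih] at hh
        rw [hh, hφ]
      have hnu : u.norm ≤ ρ ^ 2 := by
        calc u.norm ≤ ρ * (Phi x a (lt t)).toWord.length := hun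
          _ = ρ * (Phi x a (lt t)).norm := rfl
          _ ≤ ρ * ρ := Nat.mul_le_mul_left ρ hc_norm
          _ = ρ ^ 2 := (sq ρ).symm
      have hfin : a * u = a * lt t := by
        apply loc_inj h1 h3 heq2
        have harr : (a * u)⁻¹ * (a * lt t) = u⁻¹ * lt t := by group
        rw [harr]
        calc (u⁻¹ * lt t).norm ≤ u⁻¹.norm + (lt t).norm := FreeGroup.norm_mul_le _ _
          _ ≤ ρ ^ 2 + 1 := by rw [FreeGroup.norm_inv_eq, norm_lt]; omega
      rw [hsplit, heq1, hfin]
  have h := main g.toWord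
  rw [mk_toWord] at h
  exact h

/-! ### The main characterization -/

lemma pathProd_E (φ : Equiv.Perm (G r)) :
    ∀ (l : List (Fin r × Bool)) (g : G r),
      pathProd (E r φ) g l = (φ g)⁻¹ * φ (g * FreeGroup.mk l) := by
  intro l
  induction l with
  | nil =>
    intro g
    rw [← FreeGroup.one_eq_mk, mul_one]
    simp [pathProd]
  | cons t l ih =>
    intro g
    have hsplit : (FreeGroup.mk (t :: l) : G r) = lt t * FreeGroup.mk l := by
      rw [lt, mul_mk]; rfl
    simp only [pathProd, ih]
    show (φ g)⁻¹ * φ (g * lt t) * _ = _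
    rw [hsplit, show g * (lt t * FreeGroup.mk l) = g * lt t * FreeGroup.mk l from
      (mul_assoc _ _ _).symm]
    group

lemma Phi_E (φ : Equiv.Perm (G r)) (g h : G r) :
    Phi (E r φ) g h = (φ g)⁻¹ * φ (g * h) := by
  rw [Phi, pathProd_E, mk_toWord]

lemma forward {x : G r → A r} (hx : x ∈ EImage r ρ) :
    x ∈ ARhoG r ρ ∧ C1 x ∧ C2 ρ x ∧ C3 ρ x := by
  obtain ⟨φ, ⟨hφ1, hφb⟩, hE⟩ := hx
  subst hE
  refine ⟨?_, ?_, ?_, ?_⟩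
  · intro g s
    exact (hφb g s.val s.2).1
  · intro g s
    show ((φ g)⁻¹ * φ (g * s.val)) * ((φ (g * s.val))⁻¹ * φ (g * s.val * s.val⁻¹)) = 1
    rw [mul_inv_cancel_right]
    group
  · intro g s
    refine ⟨g⁻¹ * φ.symm (φ g * s.val), ?_, ?_⟩
    · have harr : g⁻¹ * φ.symm (φ g * s.val) = (φ.symm (φ g))⁻¹ * φ.symm (φ g * s.val) := by
        rw [Equiv.symm_apply_apply]
      rw [harr]
      exact (hφb (φ g) s.val s.2).2
    · rw [Phi_E, mul_inv_cancel_left, Equiv.apply_symm_apply, inv_mul_cancel_left]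
  · intro g h hn hPhi
    rw [Phi_E] at hPhi
    have heq : φ (g * h) = φ g := by
      have h' := mul_eq_one_iff_eq_inv.mp hPhi
      exact inv_injective h'.symm
    have := φ.injective heq
    exact mul_left_cancel (a := g) (by rw [this, mul_one])

lemma backward {x : G r → A r} (hA : x ∈ ARhoG r ρ) (h1 : C1 x) (h2 : C2 ρ x) (h3 : C3 ρ x) :
    x ∈ EImage r ρ := by
  refine ⟨⟨phiOf x, psi h2, psi_phi hA h1 h2 h3, phi_psi h1 h2⟩, ⟨?_, ?_⟩, ?_⟩
  · exact phiOf_one x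
  · intro g s hs
    constructor
    · show ((phiOf x g)⁻¹ * phiOf x (g * s)).norm ≤ ρ
      rw [← Phi_eq h1]
      have : Phi x g ((⟨s, hs⟩ : SS r) : G r) = x g ⟨s, hs⟩ := Phi_SS x g ⟨s, hs⟩
      rw [this]
      exact hA g ⟨s, hs⟩
    · show ((psi h2 g)⁻¹ * psi h2 (g * s)).norm ≤ ρ
      obtain ⟨t, ht⟩ := SS_eq_lt (⟨s, hs⟩ : SS r)
      simp only at ht
      rw [ht, psi_step h1 h2 h3, inv_mul_cancel_left]
      exact hch_norm h2 _ _
  · funext h s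
    show (phiOf x h)⁻¹ * phiOf x (h * s.val) = x h s
    rw [← Phi_eq h1, Phi_SS]

/-! ### Local conditions on windows -/

def LC (ρ : ℕ) (y : G r → A r) : Prop :=
  (∀ s : SS r, y 1 s * y s.val (sinv s) = 1) ∧
  (∀ s : SS r, ∃ h : G r, h.norm ≤ ρ ∧ Phi y 1 h = s.val) ∧
  (∀ h : G r, h.norm ≤ ρ ^ 2 + 1 → Phi y 1 h = 1 → h = 1)

lemma C_iff_LC {x : G r → A r} :
    (C1 x ∧ C2 ρ x ∧ C3 ρ x) ↔ ∀ g : G r, LC ρ (fun f => x (g * f)) := by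
  constructor
  · rintro ⟨h1, h2, h3⟩ g
    refine ⟨?_, ?_, ?_⟩
    · intro s
      have := h1 g s
      simpa [mul_one] using this
    · intro s
      obtain ⟨h, hn, hp⟩ := h2 g s
      exact ⟨h, hn, by rw [Phi_transl]; exact hp⟩
    · intro h hn hp
      rw [Phi_transl] at hp
      exact h3 g h hn hp
  · intro hLC
    refine ⟨?_, ?_, ?_⟩
    · intro g s
      have := (hLC g).1 s
      simpa [mul_one] using this
    · intro g s
      obtain ⟨h, hn, hp⟩ := (hLC g).2.1 s
      rw [Phi_transl] at hp
      exact ⟨h, hn, hp⟩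
    · intro g h hn hp
      exact (hLC g).2.2 h hn (by rw [Phi_transl]; exact hp)

lemma rho_le : ρ ≤ ρ ^ 2 + 1 := by nlinarith [Nat.zero_le ρ]

lemma LC_mono {y y' : G r → A r}
    (hagree : ∀ f : G r, f.norm ≤ ρ ^ 2 + 1 → y f = y' f) (h : LC ρ y) : LC ρ y' := by
  obtain ⟨ha, hb, hc⟩ := h
  have hPhi : ∀ h : G r, h.norm ≤ ρ ^ 2 + 1 → Phi y 1 h = Phi y' 1 h := by
    intro h hn
    apply pathProd_congr
    intro f hf
    apply hagree
    have : ((1 : G r)⁻¹ * f) = f := by group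
    rw [this] at hf
    exact le_trans hf (le_trans (le_of_eq rfl) hn)
  refine ⟨?_, ?_, ?_⟩
  · intro s
    rw [← hagree 1 (by simp [FreeGroup.norm_one]), ← hagree s.val (by rw [norm_SS]; omega)]
    exact ha s
  · intro s
    obtain ⟨h, hn, hp⟩ := hb s
    refine ⟨h, hn, ?_⟩
    rw [← hPhi h (le_trans hn (rho_le))]
    exact hp
  · intro h hn hp
    exact hc h hn (by rw [hPhi h hn]; exact hp)

lemma LC_congr {y y' : G r → A r}
    (hagree : ∀ f : G r, f.norm ≤ ρ ^ 2 + 1 → y f = y' f) : LC ρ y ↔ LC ρ y' :=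
  ⟨LC_mono hagree, LC_mono (fun f hf => (hagree f hf).symm)⟩

lemma main_iff {x : G r → A r} :
    x ∈ EImage r ρ ↔ (x ∈ ARhoG r ρ ∧ ∀ g : G r, LC ρ (fun f => x (g * f))) := by
  constructor
  · intro hx
    obtain ⟨hA, h1, h2, h3⟩ := forward hx
    exact ⟨hA, C_iff_LC.mp ⟨h1, h2, h3⟩⟩
  · rintro ⟨hA, hLC⟩
    obtain ⟨h1, h2, h3⟩ := C_iff_LC.mpr hLC
    exact backward hA h1 h2 h3

/-! ### Finiteness -/

lemma ball_finite (n : ℕ) : (ball r n).Finite := by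
  have hsub : ball r n ⊆ FreeGroup.mk '' {l : List (Fin r × Bool) | l.length ≤ n} := by
    intro g hg
    exact ⟨g.toWord, hg, mk_toWord⟩
  exact ((List.finite_length_le _ n).image _).subset hsub

lemma SS_finite : (SS r).Finite := by
  have hsub : SS r ⊆ (Set.range fun i : Fin r => FreeGroup.of i) ∪
      (Set.range fun i : Fin r => (FreeGroup.of i)⁻¹) := by
    rintro g ⟨i, h | h⟩
    · exact Or.inl ⟨i, h.symm⟩
    · exact Or.inr ⟨i, h.symm⟩
  exact ((Set.finite_range _).union (Set.finite_range _)).subset hsub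

instance : Finite (SS r) := SS_finite.to_subtype

instance : DiscreteTopology (G r) := ⟨rfl⟩

noncomputable def Wfin (r ρ : ℕ) : Finset (G r) := (ball_finite (r := r) (ρ ^ 2 + 1)).toFinset

lemma mem_Wfin {f : G r} : f ∈ Wfin r ρ ↔ f.norm ≤ ρ ^ 2 + 1 := by
  rw [Wfin, Set.Finite.mem_toFinset]
  rfl

noncomputable def extp (p : {g : G r // g ∈ Wfin r ρ} → A r) : G r → A r :=
  fun f => if h : f ∈ Wfin r ρ then p ⟨f, h⟩ else fun _ => 1

def BadSet (r ρ : ℕ) : Set ({g : G r // g ∈ Wfin r ρ} → A r) :=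
  {p | (∀ d s, ((p d) s).norm ≤ ρ) ∧ ¬ LC ρ (extp p)}

lemma BadSet_finite : (BadSet r ρ).Finite := by
  have hT : {a : A r | ∀ s : SS r, a s ∈ ball r ρ}.Finite :=
    Set.Finite.pi' (fun _ => ball_finite ρ)
  have hP : {p : {g : G r // g ∈ Wfin r ρ} → A r |
      ∀ d, p d ∈ {a : A r | ∀ s : SS r, a s ∈ ball r ρ}}.Finite :=
    Set.Finite.pi' (fun _ => hT)
  exact hP.subset (fun p hp d => hp.1 d)

lemma extp_eq {p : {g : G r // g ∈ Wfin r ρ} → A r} {f : G r} (h : f ∈ Wfin r ρ) :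
    extp p f = p ⟨f, h⟩ := dif_pos h

/-- Theorem `T:SFT1`.  `ℰ(sym_ρ(G)) ⊆ 𝙰_ρ^G` is a subshift of finite
type: it is closed, shift-invariant, and it is cut out inside `𝙰_ρ^G` by finitely many
forbidden patterns whose domains lie in the ball `B(e, ρ²+1)`, the patterns taking
values in `𝙰_ρ`. -/
theorem statement13 (r ρ : ℕ) (hr : 1 ≤ r) :
    IsClosed (EImage r ρ) ∧
    (∀ g : G r, shift r g '' EImage r ρ = EImage r ρ) ∧
    EImage r ρ ⊆ ARhoG r ρ ∧
    ∃ (m : ℕ) (D : Fin m → Finset (G r)) (w : (i : Fin m) → {g : G r // g ∈ D i} → A r),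
      (∀ i : Fin m, (D i : Set (G r)) ⊆ ball r (ρ ^ 2 + 1)) ∧
      (∀ (i : Fin m) (d : {g : G r // g ∈ D i}) (s : SS r), ((w i d) s).norm ≤ ρ) ∧
      EImage r ρ =
        {x ∈ ARhoG r ρ |
          ∀ (g : G r) (i : Fin m), ∃ d : {g : G r // g ∈ D i}, shift r g x d.val ≠ w i d} := by

  classical
  refine ⟨?_, ?_, ?_, ?_⟩
  · -- closedness
    rw [← isOpen_compl_iff, isOpen_iff_mem_nhds]
    intro x hx
    by_cases hA : x ∈ ARhoG r ρ
    · have hnot : ¬ ∀ g : G r, LC ρ (fun f => x (g * f)) := by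
        intro h
        exact hx (main_iff.mpr ⟨hA, h⟩)
      obtain ⟨g₀, hg₀⟩ := not_forall.mp hnot
      have hUopen : IsOpen (⋂ d ∈ Wfin r ρ, {y : G r → A r | y (g₀ * d) = x (g₀ * d)}) := by
        apply isOpen_biInter_finset
        intro d _
        show IsOpen ((fun y : G r → A r => y (g₀ * d)) ⁻¹' {x (g₀ * d)})
        exact (continuous_apply (g₀ * d)).isOpen_preimage _ (isOpen_discrete _)
      refine mem_nhds_iff.mpr ⟨_, ?_, hUopen, ?_⟩
      · intro y hy hyE
        have hyLC := (main_iff.mp hyE).2 g₀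
        apply hg₀
        apply LC_mono ?_ hyLC
        intro f hf
        exact Set.mem_iInter₂.mp hy f (mem_Wfin.mpr hf)
      · exact Set.mem_iInter₂.mpr (fun d _ => rfl)
    · obtain ⟨g, hg⟩ := not_forall.mp hA
      obtain ⟨s, hs⟩ := not_forall.mp hg
      have hUopen : IsOpen {y : G r → A r | y g = x g} := by
        show IsOpen ((fun y : G r → A r => y g) ⁻¹' {x g})
        exact (continuous_apply g).isOpen_preimage _ (isOpen_discrete _)
      refine mem_nhds_iff.mpr ⟨_, ?_, hUopen, rfl⟩
      intro y hy hyE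
      apply hs
      have := (forward hyE).1 g s
      rw [show (y g : A r) = x g from hy] at this
      exact this
  · -- shift invariance
    have hsub : ∀ (g : G r) (y : G r → A r), y ∈ EImage r ρ → shift r g y ∈ EImage r ρ := by
      rintro g y ⟨φ, ⟨hφ1, hφb⟩, hE⟩
      refine ⟨⟨fun h => (φ g⁻¹)⁻¹ * φ (g⁻¹ * h), fun k => g * φ.symm (φ g⁻¹ * k),
        ?_, ?_⟩, ⟨?_, ?_⟩, ?_⟩
      · intro h
        simp
      · intro k
        simp
      · show (φ g⁻¹)⁻¹ * φ (g⁻¹ * 1) = 1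
        rw [mul_one, inv_mul_cancel]
      · intro a s hs
        constructor
        · show (((φ g⁻¹)⁻¹ * φ (g⁻¹ * a))⁻¹ * ((φ g⁻¹)⁻¹ * φ (g⁻¹ * (a * s)))).norm ≤ ρ
          rw [show g⁻¹ * (a * s) = (g⁻¹ * a) * s from (mul_assoc _ _ _).symm]
          rw [show ((φ g⁻¹)⁻¹ * φ (g⁻¹ * a))⁻¹ * ((φ g⁻¹)⁻¹ * φ ((g⁻¹ * a) * s)) =
            (φ (g⁻¹ * a))⁻¹ * φ ((g⁻¹ * a) * s) from by group]
          exact (hφb (g⁻¹ * a) s hs).1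
        · show ((g * φ.symm (φ g⁻¹ * a))⁻¹ * (g * φ.symm (φ g⁻¹ * (a * s)))).norm ≤ ρ
          rw [show φ g⁻¹ * (a * s) = (φ g⁻¹ * a) * s from (mul_assoc _ _ _).symm]
          rw [show (g * φ.symm (φ g⁻¹ * a))⁻¹ * (g * φ.symm ((φ g⁻¹ * a) * s)) =
            (φ.symm (φ g⁻¹ * a))⁻¹ * φ.symm ((φ g⁻¹ * a) * s) from by group]
          exact (hφb (φ g⁻¹ * a) s hs).2
      · funext h s
        show ((φ g⁻¹)⁻¹ * φ (g⁻¹ * h))⁻¹ * ((φ g⁻¹)⁻¹ * φ (g⁻¹ * (h * s.val)))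
            = shift r g y h s
        have hy : shift r g y h s = (φ (g⁻¹ * h))⁻¹ * φ (g⁻¹ * h * s.val) := by
          rw [shift, ← hE]
          rfl
        rw [hy, show g⁻¹ * (h * s.val) = (g⁻¹ * h) * s.val from (mul_assoc _ _ _).symm]
        group
    intro g
    apply Set.Subset.antisymm
    · rintro _ ⟨y, hy, rfl⟩
      exact hsub g y hy
    · intro y hy
      refine ⟨shift r g⁻¹ y, hsub g⁻¹ y hy, ?_⟩
      funext f
      show y (g⁻¹⁻¹ * (g⁻¹ * f)) = y f
      rw [inv_inv, mul_inv_cancel_left]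
  · intro x hx
    exact (forward hx).1
  · -- the SFT presentation
    set BF := (BadSet_finite (r := r) (ρ := ρ)).toFinset with hBF
    refine ⟨BF.card, fun _ => Wfin r ρ, fun i => (BF.equivFin.symm i).val, ?_, ?_, ?_⟩
    · intro i f hf
      exact mem_Wfin.mp (Finset.mem_coe.mp hf)
    · intro i d s
      have hmem : ((BF.equivFin.symm i) : {g : G r // g ∈ Wfin r ρ} → A r) ∈ BadSet r ρ := by
        exact (Set.Finite.mem_toFinset _).mp (BF.equivFin.symm i).2
      exact hmem.1 d s
    · apply Set.ext
      intro x
      constructor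
      · intro hx
        obtain ⟨hA, hLC⟩ := main_iff.mp hx
        refine ⟨hA, ?_⟩
        intro g i
        by_contra hcon
        push_neg at hcon
        have hmem : ((BF.equivFin.symm i) : {g : G r // g ∈ Wfin r ρ} → A r) ∈ BadSet r ρ := by
          exact (Set.Finite.mem_toFinset _).mp (BF.equivFin.symm i).2
        apply hmem.2
        apply LC_mono ?_ (hLC g⁻¹)
        intro f hf
        have hfW : f ∈ Wfin r ρ := mem_Wfin.mpr hf
        rw [extp_eq hfW]
        exact hcon ⟨f, hfW⟩
      · rintro ⟨hA, hav⟩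
        apply main_iff.mpr
        refine ⟨hA, ?_⟩
        intro g
        by_contra hg
        have hpB : (fun d : {g' : G r // g' ∈ Wfin r ρ} => x (g * d.val)) ∈ BadSet r ρ := by
          refine ⟨fun d s => hA _ s, ?_⟩
          intro hLCp
          apply hg
          apply LC_mono ?_ hLCp
          intro f hf
          have hfW : f ∈ Wfin r ρ := mem_Wfin.mpr hf
          rw [extp_eq hfW]
        have hpBF : (fun d : {g' : G r // g' ∈ Wfin r ρ} => x (g * d.val)) ∈ BF :=
          (Set.Finite.mem_toFinset _).mpr hpB
        obtain ⟨d, hd⟩ := hav g⁻¹ (BF.equivFin ⟨_, hpBF⟩)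
        apply hd
        have hsy : BF.equivFin.symm (BF.equivFin ⟨_, hpBF⟩) = ⟨_, hpBF⟩ :=
          Equiv.symm_apply_apply _ _
        show x (g⁻¹⁻¹ * d.val) = (BF.equivFin.symm (BF.equivFin ⟨_, hpBF⟩)).val d
        rw [hsy, inv_inv]

end Stmt13
end

section
/- Let ρ ∈ ℕ and x ∈ 𝙰_ρ^G. Then x ∈ ℰ(sym_ρ(G)) if and only if for every g ∈ G the configuration z = g⁻¹·x satisfies the following two axioms: (Axiom 1) z_e(s) z_s(s⁻¹) = e for every s ∈ S ∪ S⁻¹; (Axiom 2) for every h ∈ G with |h|_G ≤ ρ there exists a unique sequence s_1, …, s_n ∈ S ∪ S⁻¹ with |s_1⋯s_n|_G = n ≤ ρ² + 1 such that h = z_e(s_1) z_{s_1}(s_2) z_{s_1 s_2}(s_3) ⋯ z_{s_1⋯s_{n−1}}(s_n), and moreover this n satisfies n ≤ ρ·|h|_G. -/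
/- Characterization of ℰ(sym_ρ(G)) inside 𝙰_ρ^G by the two local axioms. -/

namespace Stmt14

abbrev G (r : ℕ) : Type := FreeGroup (Fin r)

def SS (r : ℕ) : Set (G r) :=
  {g | ∃ i : Fin r, g = FreeGroup.of i ∨ g = (FreeGroup.of i)⁻¹}

abbrev A (r : ℕ) : Type := SS r → G r

/-- `S ∪ S⁻¹` is closed under inversion. -/
def ssInv {r : ℕ} (s : SS r) : SS r :=
  ⟨s.val⁻¹, by
    obtain ⟨i, h | h⟩ := s.property
    · exact ⟨i, Or.inr (by rw [h])⟩
    · exact ⟨i, Or.inl (by rw [h, inv_inv])⟩⟩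

/-- The left shift action of `G` on `𝙰^G`: `(g·x)(f) = x(g⁻¹ f)`. -/
def shift (r : ℕ) (g : G r) (x : G r → A r) : G r → A r := fun f => x (g⁻¹ * f)

/-- `ℰ : sym_e(G) → 𝙰^G`, `ℰ(φ)_h(s) = φ(h)⁻¹ φ(h s)`. -/
def E (r : ℕ) (φ : Equiv.Perm (G r)) : G r → A r :=
  fun h s => (φ h)⁻¹ * φ (h * s.val)

def InSymRho (r ρ : ℕ) (φ : Equiv.Perm (G r)) : Prop :=
  φ 1 = 1 ∧
    ∀ (g s : G r), s ∈ SS r →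
      ((φ g)⁻¹ * φ (g * s)).norm ≤ ρ ∧ ((φ.symm g)⁻¹ * φ.symm (g * s)).norm ≤ ρ

/-- The telescoping product `z_e(s₁) z_{s₁}(s₂) ⋯ z_{s₁⋯s_{n-1}}(s_n)` (started at `g`). -/
def wordEval (r : ℕ) (z : G r → A r) : G r → List (SS r) → G r
  | _, [] => 1
  | g, s :: l => z g s * wordEval r z (g * s.val) l

def Reduced (r : ℕ) (l : List (SS r)) : Prop :=
  ((l.map Subtype.val).prod).norm = l.length

/-- Axiom 1 for a configuration `z`: `z_e(s) z_s(s⁻¹) = e` for all `s ∈ S ∪ S⁻¹`. -/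
def Axiom1 (r : ℕ) (z : G r → A r) : Prop :=
  ∀ s : SS r, z 1 s * z s.val (ssInv s) = 1

/-- Axiom 2 for a configuration `z`: every `h` with `|h| ≤ ρ` is represented by a unique
reduced word of length `≤ ρ²+1` via the telescoping products of `z`, and moreover the
length of that word is at most `ρ·|h|`. -/
def Axiom2 (r ρ : ℕ) (z : G r → A r) : Prop :=
  ∀ h : G r, h.norm ≤ ρ →
    (∃! l : List (SS r),
        Reduced r l ∧ l.length ≤ ρ ^ 2 + 1 ∧ h = wordEval r z 1 l) ∧
    (∀ l : List (SS r),
        Reduced r l → l.length ≤ ρ ^ 2 + 1 → h = wordEval r z 1 l →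
        l.length ≤ ρ * h.norm)

/-! If `x = ℰ(φ)`, the telescoping products of `g⁻¹·x` are `φ(g)⁻¹ φ(g w)`, so the only word
representing `h` is the reduced word of `w = g⁻¹ φ⁻¹(φ(g) h)`, and `|w| ≤ ρ|h|` because `φ⁻¹` moves
neighbours at most `ρ` apart.

Conversely, Axiom 1 makes `x` a coboundary, `x_g(s) = f(g)⁻¹ f(g s)` with `f(e) = e`, and Axiom 2
lifts each step `f(g) ↦ f(g) s` uniquely to a step of length `≤ ρ` starting at `g`. A lifted step
followed by the lift of its inverse returns to `g`, so the lifts generate a right action of the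
free group `G` along which `f` is equivariant; comparing with the unique short lifts, the action
transports `g` along `f(g)⁻¹ f(g w)` to `g w`, which makes `f` a bijection in `sym_ρ(G)`. -/

section

variable {r : ℕ}

lemma norm_ss (s : SS r) : s.val.norm = 1 := by
  obtain ⟨i, h | h⟩ := s.property <;> simp [h, FreeGroup.norm_inv_eq, FreeGroup.norm_of]

def ofLetter (p : Fin r × Bool) : SS r :=
  ⟨FreeGroup.mk [p], by
    obtain ⟨i, _ | _⟩ := p
    · exact ⟨i, Or.inr rfl⟩
    · exact ⟨i, Or.inl rfl⟩⟩

lemma ofLetter_surjective : Function.Surjective (ofLetter (r := r)) := by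
  rintro ⟨s, i, rfl | rfl⟩
  · exact ⟨(i, true), rfl⟩
  · exact ⟨(i, false), rfl⟩

def wordProd (l : List (SS r)) : G r := (l.map Subtype.val).prod

@[simp] lemma wordProd_nil : wordProd ([] : List (SS r)) = 1 := rfl

@[simp] lemma wordProd_cons (s : SS r) (l : List (SS r)) :
    wordProd (s :: l) = s.val * wordProd l := List.prod_cons

lemma wordProd_map_ofLetter (L : List (Fin r × Bool)) :
    wordProd (L.map ofLetter) = FreeGroup.mk L := by
  induction L with
  | nil => rfl
  | cons p L ih => rw [List.map_cons, wordProd_cons, ih]; exact FreeGroup.mul_mk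

lemma wordProd_eq_mk (l : List (SS r)) :
    wordProd l = FreeGroup.mk (l.map (Function.surjInv ofLetter_surjective)) := by
  rw [← wordProd_map_ofLetter, List.map_map,
    (Function.rightInverse_surjInv ofLetter_surjective).comp_eq_id, List.map_id]

noncomputable def reducedWord (g : G r) : List (SS r) := g.toWord.map ofLetter

@[simp] lemma wordProd_reducedWord (g : G r) : wordProd (reducedWord g) = g := by
  rw [reducedWord, wordProd_map_ofLetter, FreeGroup.mk_toWord]

@[simp] lemma length_reducedWord (g : G r) : (reducedWord g).length = g.norm :=
  List.length_map _

lemma reduced_reducedWord (g : G r) : Reduced r (reducedWord g) := by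
  rw [Reduced, ← wordProd, wordProd_reducedWord, length_reducedWord]

lemma Reduced.norm_wordProd {l : List (SS r)} (hl : Reduced r l) :
    (wordProd l).norm = l.length := hl

lemma Reduced.reducedWord_wordProd {l : List (SS r)} (hl : Reduced r l) :
    reducedWord (wordProd l) = l := by
  set L := l.map (Function.surjInv ofLetter_surjective)
  have hL : FreeGroup.reduce L = L :=
    (FreeGroup.Red.sublist FreeGroup.reduce.red).eq_of_length (by
      rw [List.length_map, ← hl, ← wordProd, wordProd_eq_mk, FreeGroup.norm,
        FreeGroup.toWord_mk])
  rw [reducedWord, wordProd_eq_mk, FreeGroup.toWord_mk, hL, List.map_map,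
    (Function.rightInverse_surjInv ofLetter_surjective).comp_eq_id, List.map_id]

lemma existsUnique_reduced_iff (Q : ℕ → G r → Prop) :
    (∃! l, Reduced r l ∧ Q l.length (wordProd l)) ↔ ∃! w, Q w.norm w := by
  constructor
  · rintro ⟨l, ⟨hl, hQ⟩, huniq⟩
    refine ⟨wordProd l, by beta_reduce; rwa [hl.norm_wordProd], fun w hw => ?_⟩
    rw [← huniq (reducedWord w) ⟨reduced_reducedWord w, by simpa using hw⟩,
      wordProd_reducedWord]
  · rintro ⟨w, hw, huniq⟩
    refine ⟨reducedWord w, ⟨reduced_reducedWord w, by simpa using hw⟩, ?_⟩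
    rintro l ⟨hl, hQ⟩
    rw [← hl.reducedWord_wordProd, huniq (wordProd l) (by beta_reduce; rwa [hl.norm_wordProd])]

lemma forall_reduced_iff (Q : ℕ → G r → Prop) :
    (∀ l, Reduced r l → Q l.length (wordProd l)) ↔ ∀ w, Q w.norm w :=
  ⟨fun h w => by simpa using h (reducedWord w) (reduced_reducedWord w),
    fun h l hl => hl.norm_wordProd ▸ h (wordProd l)⟩

lemma induction_on_ss {C : G r → Prop} (one : C 1) (mul : ∀ (s : SS r) w, C w → C (s.val * w))
    (w : G r) : C w := by
  rw [← wordProd_reducedWord w]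
  induction reducedWord w with
  | nil => exact one
  | cons s l ih => exact mul s _ ih

lemma wordEval_shift_inv (x : G r → A r) (g : G r) :
    ∀ (a : G r) (l : List (SS r)), wordEval r (shift r g⁻¹ x) a l = wordEval r x (g * a) l
  | _, [] => rfl
  | a, s :: l => by
      rw [wordEval, wordEval, wordEval_shift_inv x g (a * s.val) l, shift, inv_inv, mul_assoc]

lemma wordEval_eq_of_eq_inv_mul {x : G r → A r} {f : G r → G r}
    (hx : ∀ g s, x g s = (f g)⁻¹ * f (g * s.val)) :
    ∀ (a : G r) (l : List (SS r)), wordEval r x a l = (f a)⁻¹ * f (a * wordProd l)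
  | a, [] => by simp [wordEval]
  | a, s :: l => by
      rw [wordEval, hx, wordEval_eq_of_eq_inv_mul hx (a * s.val) l, wordProd_cons, mul_assoc a]
      group

lemma axiom1_shift_inv_iff (x : G r → A r) :
    (∀ g, Axiom1 r (shift r g⁻¹ x)) ↔ ∀ g s, x g s * x (g * s.val) (ssInv s) = 1 := by
  simp only [Axiom1, shift, inv_inv, mul_one]

def UniqueLocalLifts (ρ : ℕ) (f : G r → G r) : Prop :=
  ∀ g h : G r, h.norm ≤ ρ →
    (∃! w : G r, w.norm ≤ ρ ^ 2 + 1 ∧ h = (f g)⁻¹ * f (g * w)) ∧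
    ∀ w : G r, w.norm ≤ ρ ^ 2 + 1 → h = (f g)⁻¹ * f (g * w) → w.norm ≤ ρ * h.norm

lemma axiom2_shift_inv_iff {ρ : ℕ} {x : G r → A r} {f : G r → G r}
    (hx : ∀ g s, x g s = (f g)⁻¹ * f (g * s.val)) :
    (∀ g, Axiom2 r ρ (shift r g⁻¹ x)) ↔ UniqueLocalLifts ρ f := by
  simp only [Axiom2, UniqueLocalLifts, wordEval_shift_inv, mul_one,
    wordEval_eq_of_eq_inv_mul hx]
  refine forall_congr' fun g => forall₂_congr fun h _ => and_congr ?_ ?_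
  · exact existsUnique_reduced_iff fun n w => n ≤ ρ ^ 2 + 1 ∧ h = (f g)⁻¹ * f (g * w)
  · exact forall_reduced_iff fun n w => n ≤ ρ ^ 2 + 1 → h = (f g)⁻¹ * f (g * w) → n ≤ ρ * h.norm

lemma norm_inv_mul_le_of_step {ρ : ℕ} (Q : G r → G r → G r) (hQ1 : ∀ p, Q p 1 = p)
    (hQmul : ∀ p (s : SS r) w, Q p (s.val * w) = Q (Q p s.val) w)
    (hstep : ∀ p (s : SS r), (p⁻¹ * Q p s.val).norm ≤ ρ) (p w : G r) :
    (p⁻¹ * Q p w).norm ≤ ρ * w.norm := by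
  suffices ∀ (l : List (SS r)) p, (p⁻¹ * Q p (wordProd l)).norm ≤ ρ * l.length by
    simpa using this (reducedWord w) p
  intro l
  induction l with
  | nil => simp [hQ1]
  | cons s l ih =>
    intro p
    calc (p⁻¹ * Q p (wordProd (s :: l))).norm
        = ((p⁻¹ * Q p s.val) * ((Q p s.val)⁻¹ * Q (Q p s.val) (wordProd l))).norm := by
          rw [wordProd_cons, hQmul]; group
      _ ≤ ρ + ρ * l.length := (FreeGroup.norm_mul_le _ _).trans (add_le_add (hstep p s) (ih _))
      _ = ρ * (s :: l).length := by simp only [List.length_cons]; ring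

lemma uniqueLocalLifts_of_inSymRho {ρ : ℕ} {φ : Equiv.Perm (G r)} (hφ : InSymRho r ρ φ) :
    UniqueLocalLifts ρ φ := by
  intro g h hh
  have hsolve : ∀ w, h = (φ g)⁻¹ * φ (g * w) ↔ w = g⁻¹ * φ.symm (φ g * h) := by
    intro w
    rw [eq_inv_mul_iff_mul_eq, eq_inv_mul_iff_mul_eq, Equiv.eq_symm_apply, eq_comm]
  have hnorm : (g⁻¹ * φ.symm (φ g * h)).norm ≤ ρ * h.norm := by
    simpa using norm_inv_mul_le_of_step (fun p w => φ.symm (φ p * w)) (by simp)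
      (by simp [mul_assoc]) (fun p s => by simpa using (hφ.2 (φ p) s.val s.property).2)
      g h
  refine ⟨⟨_, ⟨?_, (hsolve _).2 rfl⟩, fun w hw => (hsolve w).1 hw.2⟩,
    fun w _ hw => (hsolve w).1 hw ▸ hnorm⟩
  calc _ ≤ ρ * h.norm := hnorm
    _ ≤ ρ * ρ := Nat.mul_le_mul_left ρ hh
    _ ≤ ρ ^ 2 + 1 := by nlinarith

section RightAction

variable {X : Type*} (T : SS r → X → X) (hT : ∀ s p, T (ssInv s) (T s p) = p)

def generatorPerm (i : Fin r) : Equiv.Perm X where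
  toFun := T ⟨(FreeGroup.of i)⁻¹, i, Or.inr rfl⟩
  invFun := T ⟨FreeGroup.of i, i, Or.inl rfl⟩
  left_inv p := by simpa [ssInv] using hT ⟨(FreeGroup.of i)⁻¹, i, Or.inr rfl⟩ p
  right_inv p := hT ⟨FreeGroup.of i, i, Or.inl rfl⟩ p

-- `FreeGroup.lift` gives a left action; precomposing with inversion makes it a right one.
def rightAct (w : G r) (p : X) : X := FreeGroup.lift (generatorPerm T hT) w⁻¹ p

lemma rightAct_one (p : X) : rightAct T hT 1 p = p := by
  simp [rightAct]

lemma rightAct_mul (w₁ w₂ : G r) (p : X) :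
    rightAct T hT (w₁ * w₂) p = rightAct T hT w₂ (rightAct T hT w₁ p) := by
  simp [rightAct, Equiv.Perm.mul_apply]

lemma rightAct_ss (s : SS r) (p : X) : rightAct T hT s.val p = T s p := by
  obtain ⟨s, i, rfl | rfl⟩ := s
  · simp only [rightAct, map_inv, FreeGroup.lift_apply_of, Equiv.Perm.inv_def]; rfl
  · simp only [rightAct, inv_inv, FreeGroup.lift_apply_of]; rfl

lemma rightAct_ss_mul (s : SS r) (w : G r) (p : X) :
    rightAct T hT (s.val * w) p = rightAct T hT w (T s p) := by
  rw [rightAct_mul, rightAct_ss]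

lemma map_rightAct {π : X → G r} (hπ : ∀ s p, π (T s p) = π p * s.val) (w : G r) (p : X) :
    π (rightAct T hT w p) = π p * w := by
  induction w using induction_on_ss generalizing p with
  | one => rw [rightAct_one, mul_one]
  | mul s w ih => rw [rightAct_ss_mul, ih, hπ, mul_assoc]

end RightAction

/-- `f g` is the second coordinate of `(e, e)` moved by `g` under the right action of `G` on
`G × G` in which `s` acts by `(g, a) ↦ (g s, a x_g(s))`; Axiom 1 makes these steps invertible. -/
lemma exists_potential {x : G r → A r} (hx : ∀ g s, x g s * x (g * s.val) (ssInv s) = 1) :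
    ∃ f : G r → G r, f 1 = 1 ∧ ∀ g s, x g s = (f g)⁻¹ * f (g * s.val) := by
  let T : SS r → G r × G r → G r × G r := fun s p => (p.1 * s.val, p.2 * x p.1 s)
  have hT : ∀ s p, T (ssInv s) (T s p) = p := fun s p => by
    show (p.1 * s.val * s.val⁻¹, p.2 * x p.1 s * x (p.1 * s.val) (ssInv s)) = p
    rw [mul_inv_cancel_right, mul_assoc, hx, mul_one]
  have hfst : ∀ w, (rightAct T hT w (1, 1)).1 = w := fun w => by
    simpa using map_rightAct T hT (π := Prod.fst) (fun _ _ => rfl) w (1, 1)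
  refine ⟨fun w => (rightAct T hT w (1, 1)).2, by simp [rightAct_one], fun g s => ?_⟩
  simp only [rightAct_mul, rightAct_ss, T, hfst, inv_mul_cancel_left]

lemma one_le_of_uniqueLocalLifts {ρ : ℕ} (hr : 1 ≤ r) {f : G r → G r}
    (hf : UniqueLocalLifts ρ f)
    (hloc : ∀ g (s : SS r), ((f g)⁻¹ * f (g * s.val)).norm ≤ ρ) : 1 ≤ ρ := by
  by_contra! hρ
  obtain rfl : ρ = 0 := by omega
  let s : SS r := ⟨FreeGroup.of ⟨0, hr⟩, _, Or.inl rfl⟩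
  have hs : (f 1)⁻¹ * f (1 * s.val) = 1 := FreeGroup.norm_eq_zero.1 (Nat.le_zero.1 (hloc 1 s))
  have := (hf 1 1 (by simp)).1.unique (y₁ := 1) (y₂ := s.val) ⟨by simp, by simp⟩
    ⟨by simp [norm_ss], hs.symm⟩
  exact FreeGroup.one_ne_of _ this

lemma exists_liftStep {ρ : ℕ} (hρ : 1 ≤ ρ) {f : G r → G r} (hf : UniqueLocalLifts ρ f) :
    ∃ T : SS r → G r → G r, (∀ s g, T (ssInv s) (T s g) = g) ∧
      (∀ s g, f (T s g) = f g * s.val) ∧ ∀ s g, (g⁻¹ * T s g).norm ≤ ρ := by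
  have hsρ : ∀ s : SS r, s.val.norm ≤ ρ := fun s => (norm_ss s).trans_le hρ
  choose w hw huniq using fun g (s : SS r) => (hf g s.val (hsρ s)).1
  have hwρ : ∀ g s, (w g s).norm ≤ ρ := fun g s => by
    simpa [norm_ss] using (hf g s.val (hsρ s)).2 _ (hw g s).1 (hw g s).2
  refine ⟨fun s g => g * w g s, fun s g => ?_, fun s g => ?_, fun s g => by simpa using hwρ g s⟩
  · show g * w g s * w (g * w g s) (ssInv s) = g
    rw [← huniq (g * w g s) (ssInv s) (w g s)⁻¹ ⟨?_, ?_⟩, mul_inv_cancel_right]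
    · rw [FreeGroup.norm_inv_eq]; nlinarith [hwρ g s]
    · rw [mul_inv_cancel_right, ← (eq_inv_mul_iff_mul_eq.1 (hw g s).2)]; simp [ssInv]
  · exact (eq_inv_mul_iff_mul_eq.1 (hw g s).2).symm

theorem bijective_of_uniqueLocalLifts {ρ : ℕ} (hρ : 1 ≤ ρ) {f : G r → G r}
    (hf : UniqueLocalLifts ρ f) (hloc : ∀ g (s : SS r), ((f g)⁻¹ * f (g * s.val)).norm ≤ ρ) :
    Function.Bijective f := by
  obtain ⟨T, hT, hTf, hTρ⟩ := exists_liftStep hρ hf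
  let act := rightAct T hT
  have hf_act : ∀ w g, f (act w g) = f g * w := map_rightAct T hT hTf
  have hact_near : ∀ g w, (g⁻¹ * act w g).norm ≤ ρ * w.norm :=
    norm_inv_mul_le_of_step (fun p w => act w p) (rightAct_one T hT)
      (fun p s w => rightAct_mul T hT s.val w p)
      (fun p s => by simpa [act, rightAct_ss] using hTρ s p)
  have hact_ss : ∀ g (s : SS r), act ((f g)⁻¹ * f (g * s.val)) g = g * s.val := by
    intro g s
    set h := (f g)⁻¹ * f (g * s.val)
    have hnorm : (g⁻¹ * act h g).norm ≤ ρ ^ 2 + 1 := by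
      nlinarith [hact_near g h, hloc g s, Nat.mul_le_mul_left ρ (hloc g s)]
    have := (hf g h (hloc g s)).1.unique (y₁ := g⁻¹ * act h g) (y₂ := s.val)
      ⟨hnorm, by rw [mul_inv_cancel_left, hf_act, inv_mul_cancel_left]⟩
      ⟨by rw [norm_ss]; omega, rfl⟩
    rw [← this, mul_inv_cancel_left]
  have hact : ∀ w g, act ((f g)⁻¹ * f (g * w)) g = g * w := by
    intro w
    induction w using induction_on_ss with
    | one => intro g; simpa [act] using rightAct_one T hT g
    | mul s w ih =>
      intro g
      calc act ((f g)⁻¹ * f (g * (s.val * w))) g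
          = act ((f (g * s.val))⁻¹ * f (g * s.val * w)) (act ((f g)⁻¹ * f (g * s.val)) g) := by
            simp only [act]; rw [← rightAct_mul]; congr 1; group
        _ = g * (s.val * w) := by rw [hact_ss, ih, mul_assoc]
  refine ⟨fun a b hab => ?_, fun c => ⟨act ((f 1)⁻¹ * c) 1, by rw [hf_act, mul_inv_cancel_left]⟩⟩
  simpa [hab, act, rightAct_one] using hact (a⁻¹ * b) a

lemma norm_inv_mul_symm_le {ρ : ℕ} (hρ : 1 ≤ ρ) {φ : Equiv.Perm (G r)}
    (hφ : UniqueLocalLifts ρ φ) (g : G r) (s : SS r) :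
    ((φ.symm g)⁻¹ * φ.symm (g * s.val)).norm ≤ ρ := by
  have hs : s.val.norm ≤ ρ := (norm_ss s).trans_le hρ
  obtain ⟨w, ⟨hw, hsw⟩, -⟩ := (hφ (φ.symm g) s.val hs).1
  have hwρ : w.norm ≤ ρ := by simpa [norm_ss] using (hφ (φ.symm g) s.val hs).2 w hw hsw
  rw [Equiv.apply_symm_apply, eq_inv_mul_iff_mul_eq] at hsw
  rwa [hsw, Equiv.symm_apply_apply, inv_mul_cancel_left]

end

/-- For `x ∈ 𝙰_ρ^G`, `x ∈ ℰ(sym_ρ(G))` iff every translate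
`z = g⁻¹·x` satisfies Axiom 1 and Axiom 2. -/
theorem statement14 (r ρ : ℕ) (hr : 1 ≤ r) (x : G r → A r)
    (hxρ : ∀ (g : G r) (s : SS r), (x g s).norm ≤ ρ) :
    (∃ φ : Equiv.Perm (G r), InSymRho r ρ φ ∧ E r φ = x) ↔
      ∀ g : G r, Axiom1 r (shift r g⁻¹ x) ∧ Axiom2 r ρ (shift r g⁻¹ x) := by
  constructor
  · rintro ⟨φ, hφ, rfl⟩
    have hA1 : ∀ g s, E r φ g s * E r φ (g * s.val) (ssInv s) = 1 := fun g s => by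
      simp [E, ssInv, mul_assoc]
    exact fun g => ⟨(axiom1_shift_inv_iff _).2 hA1 g,
      (axiom2_shift_inv_iff fun _ _ => rfl).2 (uniqueLocalLifts_of_inSymRho hφ) g⟩
  · intro hax
    obtain ⟨f, hf1, hx⟩ := exists_potential ((axiom1_shift_inv_iff x).1 fun g => (hax g).1)
    have hf : UniqueLocalLifts ρ f := (axiom2_shift_inv_iff hx).1 fun g => (hax g).2
    have hloc : ∀ g (s : SS r), ((f g)⁻¹ * f (g * s.val)).norm ≤ ρ := fun g s => hx g s ▸ hxρ g s
    have hρ : 1 ≤ ρ := one_le_of_uniqueLocalLifts hr hf hloc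
    let φ := Equiv.ofBijective f (bijective_of_uniqueLocalLifts hρ hf hloc)
    refine ⟨φ, ⟨hf1, fun g s hs => ⟨hloc g ⟨s, hs⟩, norm_inv_mul_symm_le hρ hf g ⟨s, hs⟩⟩⟩, ?_⟩
    exact funext₂ fun g s => (hx g s).symm

end Stmt14
end

section
/- The map ℱ : sym_e(G) → 𝙰^G is an embedding: it is equivariant in the sense that ℱ(℧^h φ) = h·ℱ(φ) for all h ∈ G and φ ∈ sym_e(G), and it is continuous and injective. Moreover, for any set 𝙱, the extended maps t̃ℰ, t̃ℱ : sym_e(G) × 𝙱^G → 𝙰^G × 𝙱^G defined by t̃ℰ(φ,y) = (ℰ(φ), y) and t̃ℱ(φ,y) = (ℱ(φ), y∘φ⁻¹) satisfy t̃ℰ(Θ̃^h(φ,y)) = h·t̃ℰ(φ,y) and t̃ℱ(℧̃^h(φ,y)) = h·t̃ℱ(φ,y) for all h ∈ G, where h acts diagonally on 𝙰^G × 𝙱^G by the left shift in each coordinate. -/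
/- The map ℱ : sym_e(G) → 𝙰^G is an embedding (℧-equivariant, continuous, injective),
   and the extended maps t̃ℰ, t̃ℱ on sym_e(G) × 𝙱^G are equivariant for Θ̃, ℧̃. -/

namespace Stmt16

abbrev G (r : ℕ) : Type := FreeGroup (Fin r)

instance (r : ℕ) : TopologicalSpace (G r) := ⊥

def SS (r : ℕ) : Set (G r) :=
  {g | ∃ i : Fin r, g = FreeGroup.of i ∨ g = (FreeGroup.of i)⁻¹}

abbrev A (r : ℕ) : Type := SS r → G r

/-- Topology of pointwise convergence of a bijection together with its inverse. -/
instance (r : ℕ) : TopologicalSpace (Equiv.Perm (G r)) :=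
  TopologicalSpace.induced
    (fun φ : Equiv.Perm (G r) => ((φ : G r → G r), (φ.symm : G r → G r))) inferInstance

abbrev symE (r : ℕ) : Type := {φ : Equiv.Perm (G r) // φ 1 = 1}

/-- The left shift `(g·y)(f) = y(g⁻¹ f)` on `C^G` for any `C`. -/
def shift (r : ℕ) {C : Type*} (g : G r) (y : G r → C) : G r → C := fun f => y (g⁻¹ * f)

/-- `(Θ^h φ)(g) = φ(h⁻¹)⁻¹ φ(h⁻¹ g)`. -/
def theta (r : ℕ) (h : G r) (φ : Equiv.Perm (G r)) : Equiv.Perm (G r) :=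
  (Equiv.mulLeft h⁻¹).trans (φ.trans (Equiv.mulLeft (φ h⁻¹)⁻¹))

/-- `(℧^h φ)(g) = h φ(φ⁻¹(h⁻¹) g)`. -/
def mho (r : ℕ) (h : G r) (φ : Equiv.Perm (G r)) : Equiv.Perm (G r) :=
  (Equiv.mulLeft (φ.symm h⁻¹)).trans (φ.trans (Equiv.mulLeft h))

/-- `ℰ(φ)_h(s) = φ(h)⁻¹ φ(h s)`. -/
def E (r : ℕ) (φ : Equiv.Perm (G r)) : G r → A r :=
  fun h s => (φ h)⁻¹ * φ (h * s.val)

/-- `ℱ(φ)_h(s) = h⁻¹ φ(φ⁻¹(h) s)`. -/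
def F (r : ℕ) (φ : Equiv.Perm (G r)) : G r → A r :=
  fun h s => h⁻¹ * φ (φ.symm h * s.val)

/-- `t̃ℰ(φ,y) = (ℰ(φ), y)`. -/
def tE (r : ℕ) {B : Type*} (p : Equiv.Perm (G r) × (G r → B)) : (G r → A r) × (G r → B) :=
  (E r p.1, p.2)

/-- `t̃ℱ(φ,y) = (ℱ(φ), y ∘ φ⁻¹)`. -/
def tF (r : ℕ) {B : Type*} (p : Equiv.Perm (G r) × (G r → B)) : (G r → A r) × (G r → B) :=
  (F r p.1, p.2 ∘ p.1.symm)

/-- `Θ̃^g(φ,y) = (Θ^g φ, g·y)`. -/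
def thetaTilde (r : ℕ) {B : Type*} (g : G r) (p : Equiv.Perm (G r) × (G r → B)) :
    Equiv.Perm (G r) × (G r → B) :=
  (theta r g p.1, shift r g p.2)

/-- `℧̃^g(φ,y) = (℧^g φ, (φ⁻¹(g⁻¹))⁻¹·y)`. -/
def mhoTilde (r : ℕ) {B : Type*} (g : G r) (p : Equiv.Perm (G r) × (G r → B)) :
    Equiv.Perm (G r) × (G r → B) :=
  (mho r g p.1, shift r ((p.1.symm g⁻¹)⁻¹) p.2)

lemma cont_eval {α β γ : Type*} [TopologicalSpace α] [TopologicalSpace β] [TopologicalSpace γ]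
    [DiscreteTopology β] {f : α → β → γ} {g : α → β}
    (hf : Continuous f) (hg : Continuous g) : Continuous fun a => f a (g a) := by
  rw [continuous_iff_continuousAt]
  intro a
  have hmem : g ⁻¹' {g a} ∈ nhds a :=
    (hg.isOpen_preimage {g a} (isOpen_discrete _)).mem_nhds rfl
  have heq : (fun x => f x (g a)) =ᶠ[nhds a] fun x => f x (g x) := by
    filter_upwards [hmem] with x hx
    simp only [Set.mem_preimage, Set.mem_singleton_iff] at hx
    rw [hx]
  exact ContinuousAt.congr (((continuous_apply (g a)).comp hf).continuousAt) heq

lemma F_mho (r : ℕ) (h : G r) (φ : Equiv.Perm (G r)) :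
    F r (mho r h φ) = shift r h (F r φ) := by
  funext f s
  simp only [F, mho, shift, Equiv.trans_apply, Equiv.symm_trans_apply,
    Equiv.mulLeft_symm, Equiv.coe_mulLeft, mul_inv_rev, inv_inv]
  group

/-- `ℱ` is an `℧`-equivariant, continuous, injective embedding of
`sym_e(G)` into `𝙰^G`, and the extended maps `t̃ℰ`, `t̃ℱ` intertwine `Θ̃`, `℧̃` with
the diagonal shift on `𝙰^G × 𝙱^G`. -/
theorem statement16 (r : ℕ) (hr : 1 ≤ r) (B : Type*) :
    (∀ (h : G r) (φ : Equiv.Perm (G r)), φ 1 = 1 →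
        F r (mho r h φ) = shift r h (F r φ)) ∧
    Continuous (fun φ : symE r => F r φ.val) ∧
    Function.Injective (fun φ : symE r => F r φ.val) ∧
    (∀ (h : G r) (p : Equiv.Perm (G r) × (G r → B)), p.1 1 = 1 →
        tE r (thetaTilde r h p) = (shift r h (tE r p).1, shift r h (tE r p).2)) ∧
    (∀ (h : G r) (p : Equiv.Perm (G r) × (G r → B)), p.1 1 = 1 →
        tF r (mhoTilde r h p) = (shift r h (tF r p).1, shift r h (tF r p).2)) := by
  haveI : DiscreteTopology (G r) := ⟨rfl⟩
  refine ⟨fun h φ _ => F_mho r h φ, ?_, ?_, ?_, ?_⟩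
  · -- continuity
    apply continuous_pi; intro h; apply continuous_pi; intro s
    have hj : Continuous (fun φ : symE r =>
        ((φ.val : G r → G r), (φ.val.symm : G r → G r))) :=
      by exact Continuous.comp (continuous_induced_dom (f := fun φ : Equiv.Perm (G r) =>
        ((φ : G r → G r), (φ.symm : G r → G r)))) continuous_subtype_val
    have hg : Continuous fun φ : symE r => φ.val.symm h * s.val :=
      continuous_of_discreteTopology.comp
        ((continuous_apply h).comp (continuous_snd.comp hj))
    have := cont_eval (continuous_fst.comp hj) hg
    exact continuous_of_discreteTopology.comp this
  · -- injectivity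
    rintro ⟨φ, hφ⟩ ⟨ψ, hψ⟩ heq
    simp only at heq
    have key : ∀ l : List (Fin r × Bool), φ (FreeGroup.mk l) = ψ (FreeGroup.mk l) := by
      intro l
      induction l using List.reverseRecOn with
      | nil =>
        show φ 1 = ψ 1
        rw [hφ, hψ]
      | append_singleton l a ih =>
        obtain ⟨i, b⟩ := a
        set g : G r := FreeGroup.mk l with hg
        have hs : FreeGroup.mk [(i, b)] ∈ SS r := by
          refine ⟨i, ?_⟩
          cases b
          · right; rfl
          · left; rfl
        have e1 := congrFun (congrFun heq (φ g)) ⟨FreeGroup.mk [(i, b)], hs⟩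
        simp only [F, Equiv.symm_apply_apply] at e1
        rw [ih, Equiv.symm_apply_apply] at e1
        have e2 := mul_left_cancel e1
        rw [FreeGroup.mul_mk] at e2
        exact e2
    have : φ = ψ := Equiv.ext fun g => by
      have := key g.toWord
      rwa [FreeGroup.mk_toWord] at this
    exact Subtype.ext this
  · -- tE / thetaTilde
    intro h p _
    refine Prod.ext ?_ rfl
    funext f s
    simp only [tE, thetaTilde, E, theta, shift, Equiv.trans_apply, Equiv.coe_mulLeft,
      mul_inv_rev, inv_inv]
    group
  · -- tF / mhoTilde
    intro h p _
    refine Prod.ext ?_ ?_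
    · exact F_mho r h p.1
    · funext f
      simp only [tF, mhoTilde, mho, shift, Function.comp_apply, Equiv.symm_trans_apply,
        Equiv.mulLeft_symm, Equiv.coe_mulLeft, inv_inv]
      group

end Stmt16
end

section
/- Let ρ, n ∈ ℕ, let σ : G → Sym(n) be a group homomorphism, and let x ∈ 𝙰^n be such that the pullback name x^σ_v belongs to ℰ(sym_ρ(G)) for every v ∈ [n]. For each v let φ_v ∈ sym_ρ(G) be the unique element with ℰ(φ_v) = x^σ_v. Then there exists a unique group homomorphism τ : G → Sym(n) satisfying τ(g)v = σ((φ_v⁻¹(g⁻¹))⁻¹)v for all g ∈ G and v ∈ [n]. Moreover, ℱ(ℰ⁻¹(x^σ_v)) = x^τ_v for every v ∈ [n]. -/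
/-! Since the generators generate `G`, a map `G → G` is determined by its value at `e` and its
`ℰ`-name. Comparing the shift `h ↦ φ_v(g)⁻¹ φ_v(g h)` with `φ_{σ(g)⁻¹ v}` (both have name
`x^σ_{σ(g)⁻¹ v}`) gives the cocycle identity `φ_v(g h) = φ_v(g) φ_{σ(g)⁻¹ v}(h)`, and this is exactly
what makes `τ(g) v = σ((φ_v⁻¹(g⁻¹))⁻¹) v` an action. Finally `ℱ(φ) = ℰ(φ) ∘ φ⁻¹` turns the name
`x^σ_v ∘ φ_v⁻¹` into `x^τ_v`. -/

namespace Stmt17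

abbrev G (r : ℕ) : Type := FreeGroup (Fin r)

def SS (r : ℕ) : Set (G r) :=
  {g | ∃ i : Fin r, g = FreeGroup.of i ∨ g = (FreeGroup.of i)⁻¹}

abbrev A (r : ℕ) : Type := SS r → G r

/-- `ℰ(φ)_h(s) = φ(h)⁻¹ φ(h s)`. -/
def E (r : ℕ) (φ : Equiv.Perm (G r)) : G r → A r :=
  fun h s => (φ h)⁻¹ * φ (h * s.val)

/-- `ℱ(φ)_h(s) = h⁻¹ φ(φ⁻¹(h) s)`. -/
def F (r : ℕ) (φ : Equiv.Perm (G r)) : G r → A r :=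
  fun h s => h⁻¹ * φ (φ.symm h * s.val)

def InSymRho (r ρ : ℕ) (φ : Equiv.Perm (G r)) : Prop :=
  φ 1 = 1 ∧
    ∀ (g s : G r), s ∈ SS r →
      ((φ g)⁻¹ * φ (g * s)).norm ≤ ρ ∧ ((φ.symm g)⁻¹ * φ.symm (g * s)).norm ≤ ρ

/-- The pullback name of `x : [n] → C` at `v`, `x^σ_v(g) = x(σ(g)⁻¹ v)`. -/
def pull (r : ℕ) {n : ℕ} {C : Type*} (σ : G r →* Equiv.Perm (Fin n))
    (x : Fin n → C) (v : Fin n) : G r → C :=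
  fun g => x ((σ g)⁻¹ v)

theorem apply_eq_apply_one_of_mul_right_invariant {G α : Type*} [Group G] {S : Set G}
    (hS : Subgroup.closure S = ⊤) {u : G → α} (hu : ∀ g, ∀ s ∈ S, u (g * s) = u g) (g : G) :
    u g = u 1 := by
  have hg : g ∈ Subgroup.closure S := hS ▸ Subgroup.mem_top g
  induction hg using Subgroup.closure_induction_right with
  | one => rfl
  | mul_right x _ s hs ih => rw [hu x s hs, ih]
  | mul_inv_cancel x _ s hs ih => rw [← ih, ← hu (x * s⁻¹) s hs, inv_mul_cancel_right]

/-- `g ↦ f' g * (f g)⁻¹` is right-invariant under `S`, hence constant. -/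
theorem eq_of_inv_mul_apply_mul_eq {G H : Type*} [Group G] [Group H] {S : Set G}
    (hS : Subgroup.closure S = ⊤) {f f' : G → H} (h1 : f 1 = f' 1)
    (hf : ∀ g, ∀ s ∈ S, (f g)⁻¹ * f (g * s) = (f' g)⁻¹ * f' (g * s)) : f = f' := by
  have hu : ∀ g, ∀ s ∈ S, f' (g * s) * (f (g * s))⁻¹ = f' g * (f g)⁻¹ := by
    intro g s hs
    rw [← mul_inv_cancel_left (f' g) (f' (g * s)), ← hf g s hs]
    group
  funext g
  have := apply_eq_apply_one_of_mul_right_invariant (u := fun g => f' g * (f g)⁻¹) hS hu g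
  rwa [h1, mul_inv_cancel, mul_inv_eq_one, eq_comm] at this

theorem closure_SS (r : ℕ) : Subgroup.closure (SS r) = ⊤ :=
  eq_top_mono (Subgroup.closure_mono <| Set.range_subset_iff.2 fun i => ⟨i, Or.inl rfl⟩)
    (FreeGroup.closure_range_of (Fin r))

theorem F_apply (r : ℕ) (φ : Equiv.Perm (G r)) (h : G r) : F r φ h = E r φ (φ.symm h) := by
  unfold F E
  rw [Equiv.apply_symm_apply]

/-- For `g = 1` this is the injectivity of `ℰ` on `sym_e(G)`. -/
theorem inv_mul_apply_mul_eq_of_E_eq {r : ℕ} {φ ψ : Equiv.Perm (G r)} (hψ : ψ 1 = 1) (g : G r)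
    (hE : ∀ h, E r φ (g * h) = E r ψ h) (h : G r) : (φ g)⁻¹ * φ (g * h) = ψ h := by
  refine congrFun (eq_of_inv_mul_apply_mul_eq (f := fun h => (φ g)⁻¹ * φ (g * h)) (f' := ψ)
    (closure_SS r) (by simp [hψ]) fun h s hs => ?_) h
  have := congrFun (hE h) ⟨s, hs⟩
  simp only [E, mul_assoc] at this
  rw [← this]
  group

theorem pull_mul (r : ℕ) {n : ℕ} {C : Type*} (σ : G r →* Equiv.Perm (Fin n)) (x : Fin n → C)
    (v : Fin n) (g h : G r) : pull r σ x v (g * h) = pull r σ x ((σ g)⁻¹ v) h := by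
  simp only [pull, map_mul, mul_inv_rev, Equiv.Perm.mul_apply]

section Cocycle

variable {r n : ℕ} {σ : G r →* Equiv.Perm (Fin n)} {x : Fin n → A r}
  {φ : Fin n → Equiv.Perm (G r)} (hφ1 : ∀ v, φ v 1 = 1) (hE : ∀ v, E r (φ v) = pull r σ x v)
include hφ1 hE

theorem inv_mul_apply_mul (v : Fin n) (g h : G r) :
    (φ v g)⁻¹ * φ v (g * h) = φ ((σ g)⁻¹ v) h :=
  inv_mul_apply_mul_eq_of_E_eq (hφ1 _) g (fun h => by rw [hE, hE, pull_mul]) h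

theorem symm_apply_eq_inv_mul_symm_apply (v : Fin n) (a y : G r) :
    (φ ((σ a)⁻¹ v)).symm y = a⁻¹ * (φ v).symm (φ v a * y) := by
  rw [Equiv.symm_apply_eq, ← inv_mul_apply_mul hφ1 hE, mul_inv_cancel_left,
    Equiv.apply_symm_apply, inv_mul_cancel_left]

end Cocycle

section Rearrangement

variable {r n : ℕ} (σ : G r →* Equiv.Perm (Fin n)) (φ : Fin n → Equiv.Perm (G r))

def rearrange (g : G r) (v : Fin n) : Fin n := σ (((φ v).symm g⁻¹)⁻¹) v

variable {σ φ} {x : Fin n → A r} (hφ1 : ∀ v, φ v 1 = 1) (hE : ∀ v, E r (φ v) = pull r σ x v)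
include hφ1

theorem rearrange_one : rearrange σ φ 1 = id := by
  funext v
  have : (φ v).symm 1 = 1 := by rw [Equiv.symm_apply_eq, hφ1]
  simp [rearrange, this]

include hE in
theorem rearrange_mul (g₁ g₂ : G r) :
    rearrange σ φ (g₁ * g₂) = rearrange σ φ g₁ ∘ rearrange σ φ g₂ := by
  funext v
  have hv : rearrange σ φ g₂ v = (σ ((φ v).symm g₂⁻¹))⁻¹ v := by rw [rearrange, map_inv]
  rw [Function.comp_apply, hv, rearrange, rearrange, symm_apply_eq_inv_mul_symm_apply hφ1 hE,
    Equiv.apply_symm_apply, ← mul_inv_rev, mul_inv_rev ((φ v).symm g₂⁻¹)⁻¹, inv_inv, map_mul,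
    ← Equiv.Perm.mul_apply, mul_inv_cancel_right]

def rearrangeHom : G r →* Function.End (Fin n) where
  toFun := rearrange σ φ
  map_one' := rearrange_one hφ1
  map_mul' := rearrange_mul hφ1 hE

end Rearrangement

theorem F_eq_pull_rearrangeHom {r n : ℕ} {σ : G r →* Equiv.Perm (Fin n)} {x : Fin n → A r}
    {φ : Fin n → Equiv.Perm (G r)} (hφ1 : ∀ v, φ v 1 = 1) (hE : ∀ v, E r (φ v) = pull r σ x v)
    (v : Fin n) : F r (φ v) = pull r (rearrangeHom hφ1 hE).toHomPerm x v := by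
  funext h
  rw [F_apply, hE, pull, pull, ← map_inv (rearrangeHom hφ1 hE).toHomPerm]
  show _ = x (σ (((φ v).symm h⁻¹⁻¹)⁻¹) v)
  rw [inv_inv, map_inv]

theorem statement17_general (r ρ n : ℕ)
    (σ : G r →* Equiv.Perm (Fin n)) (x : Fin n → A r)
    (φ : Fin n → Equiv.Perm (G r))
    (hφ : ∀ v : Fin n, InSymRho r ρ (φ v) ∧ E r (φ v) = pull r σ x v) :
    ∃ τ : G r →* Equiv.Perm (Fin n),
      (∀ (g : G r) (v : Fin n), τ g v = σ (((φ v).symm g⁻¹)⁻¹) v) ∧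
      (∀ τ' : G r →* Equiv.Perm (Fin n),
        (∀ (g : G r) (v : Fin n), τ' g v = σ (((φ v).symm g⁻¹)⁻¹) v) → τ' = τ) ∧
      (∀ v : Fin n, F r (φ v) = pull r τ x v) := by
  have hφ1 : ∀ v, φ v 1 = 1 := fun v => (hφ v).1.1
  have hE : ∀ v, E r (φ v) = pull r σ x v := fun v => (hφ v).2
  exact ⟨(rearrangeHom hφ1 hE).toHomPerm, fun _ _ => rfl,
    fun τ' hτ' => MonoidHom.ext fun g => Equiv.ext (hτ' g), F_eq_pull_rearrangeHom hφ1 hE⟩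

/-- Lemma `L:tau`. -/
theorem statement17 (r ρ n : ℕ) (hr : 1 ≤ r)
    (σ : G r →* Equiv.Perm (Fin n)) (x : Fin n → A r)
    (φ : Fin n → Equiv.Perm (G r))
    (hφ : ∀ v : Fin n, InSymRho r ρ (φ v) ∧ E r (φ v) = pull r σ x v) :
    ∃ τ : G r →* Equiv.Perm (Fin n),
      (∀ (g : G r) (v : Fin n), τ g v = σ (((φ v).symm g⁻¹)⁻¹) v) ∧
      (∀ τ' : G r →* Equiv.Perm (Fin n),
        (∀ (g : G r) (v : Fin n), τ' g v = σ (((φ v).symm g⁻¹)⁻¹) v) → τ' = τ) ∧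
      (∀ v : Fin n, F r (φ v) = pull r τ x v) :=
  statement17_general r ρ n σ x φ hφ

end Stmt17
end

section
/- Let ρ, n ∈ ℕ, σ : G → Sym(n) a group homomorphism, and x ∈ 𝙰^n with x^σ_v ∈ ℰ(sym_ρ(G)) for every v ∈ [n]; let φ_v = ℰ⁻¹(x^σ_v) and let τ : G → Sym(n) be the homomorphism with τ(g)v = σ((φ_v⁻¹(g⁻¹))⁻¹)v. Then for any set 𝙱 and any y ∈ 𝙱^n, one has y^τ_v = y^σ_v ∘ φ_v⁻¹ for every v ∈ [n]; equivalently, t̃ℱ(t̃ℰ⁻¹(x^σ_v, y^σ_v)) = (x^τ_v, y^τ_v) for every v ∈ [n]. -/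
/- Lemma (L:tau2): with τ the rearranged homomorphism of Lemma (L:tau), for any
   y ∈ 𝙱^n one has y^τ_v = y^σ_v ∘ φ_v⁻¹, i.e. t̃ℱ(t̃ℰ⁻¹(x^σ_v, y^σ_v)) = (x^τ_v, y^τ_v). -/

namespace Stmt18

abbrev G (r : ℕ) : Type := FreeGroup (Fin r)

def SS (r : ℕ) : Set (G r) :=
  {g | ∃ i : Fin r, g = FreeGroup.of i ∨ g = (FreeGroup.of i)⁻¹}

abbrev A (r : ℕ) : Type := SS r → G r

/-- `ℰ(φ)_h(s) = φ(h)⁻¹ φ(h s)`. -/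
def E (r : ℕ) (φ : Equiv.Perm (G r)) : G r → A r :=
  fun h s => (φ h)⁻¹ * φ (h * s.val)

/-- `ℱ(φ)_h(s) = h⁻¹ φ(φ⁻¹(h) s)`. -/
def F (r : ℕ) (φ : Equiv.Perm (G r)) : G r → A r :=
  fun h s => h⁻¹ * φ (φ.symm h * s.val)

def InSymRho (r ρ : ℕ) (φ : Equiv.Perm (G r)) : Prop :=
  φ 1 = 1 ∧
    ∀ (g s : G r), s ∈ SS r →
      ((φ g)⁻¹ * φ (g * s)).norm ≤ ρ ∧ ((φ.symm g)⁻¹ * φ.symm (g * s)).norm ≤ ρ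

/-- The pullback name of `x : [n] → C` at `v`, `x^σ_v(g) = x(σ(g)⁻¹ v)`. -/
def pull (r : ℕ) {n : ℕ} {C : Type*} (σ : G r →* Equiv.Perm (Fin n))
    (x : Fin n → C) (v : Fin n) : G r → C :=
  fun g => x ((σ g)⁻¹ v)

theorem pull_tau_key {r n : ℕ} {C : Type*}
    (σ : G r →* Equiv.Perm (Fin n)) (φ : Fin n → Equiv.Perm (G r))
    (τ : G r →* Equiv.Perm (Fin n))
    (hτ : ∀ (g : G r) (v : Fin n), τ g v = σ (((φ v).symm g⁻¹)⁻¹) v)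
    (z : Fin n → C) (v : Fin n) :
    pull r τ z v = (pull r σ z v) ∘ (φ v).symm := by
  funext g
  simp only [pull, Function.comp_apply]
  congr 1
  have h := hτ g⁻¹ v
  simp only [inv_inv] at h
  calc (τ g)⁻¹ v = τ g⁻¹ v := by rw [← map_inv]
    _ = σ ((φ v).symm g)⁻¹ v := by rw [h, map_inv]
    _ = (σ ((φ v).symm g))⁻¹ v := by rw [map_inv]

/-- Lemma `L:tau2`. -/
theorem statement18 (r ρ n : ℕ) (hr : 1 ≤ r) (B : Type*)
    (σ : G r →* Equiv.Perm (Fin n)) (x : Fin n → A r)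
    (φ : Fin n → Equiv.Perm (G r))
    (hφ : ∀ v : Fin n, InSymRho r ρ (φ v) ∧ E r (φ v) = pull r σ x v)
    (τ : G r →* Equiv.Perm (Fin n))
    (hτ : ∀ (g : G r) (v : Fin n), τ g v = σ (((φ v).symm g⁻¹)⁻¹) v)
    (y : Fin n → B) :
    ∀ v : Fin n,
      pull r τ y v = (pull r σ y v) ∘ (φ v).symm ∧
      (F r (φ v), (pull r σ y v) ∘ (φ v).symm) = (pull r τ x v, pull r τ y v) := by
  intro v
  have h1 := pull_tau_key σ φ τ hτ y v
  refine ⟨h1, ?_⟩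
  have hx : pull r τ x v = F r (φ v) := by
    rw [pull_tau_key σ φ τ hτ x v, ← (hφ v).2]
    funext h s
    simp [E, F]
  rw [hx, h1]

end Stmt18
end

section
/- Let ρ, n ∈ ℕ, σ : G → Sym(n) a group homomorphism, and x ∈ 𝙰^n with x^σ_v ∈ ℰ(sym_ρ(G)) for every v ∈ [n]; let φ_v = ℰ⁻¹(x^σ_v) and let τ : G → Sym(n) be the homomorphism with τ(g)v = σ((φ_v⁻¹(g⁻¹))⁻¹)v. Then σ(h)v = τ((x(v)(h⁻¹))⁻¹)v for every h ∈ S ∪ S⁻¹ and v ∈ [n]. Consequently, if σ' : G → Sym(n) is another homomorphism such that x^{σ'}_v ∈ ℰ(sym_ρ(G)) for every v and the homomorphism τ' induced by (σ', x) equals τ, then σ' = σ; i.e., the map (σ, x) ↦ (τ, x) is injective on the set of pairs (σ, x) with x^σ_v ∈ ℰ(sym_ρ(G)) for all v. -/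
/- Claim 2 in the proof of the main theorem: σ can be recovered from (τ, x), so the
   map (σ, x) ↦ (τ, x) on pairs with all pullback names in ℰ(sym_ρ(G)) is injective. -/

namespace Stmt19

abbrev G (r : ℕ) : Type := FreeGroup (Fin r)

def SS (r : ℕ) : Set (G r) :=
  {g | ∃ i : Fin r, g = FreeGroup.of i ∨ g = (FreeGroup.of i)⁻¹}

abbrev A (r : ℕ) : Type := SS r → G r

/-- `ℰ(φ)_h(s) = φ(h)⁻¹ φ(h s)`. -/
def E (r : ℕ) (φ : Equiv.Perm (G r)) : G r → A r :=
  fun h s => (φ h)⁻¹ * φ (h * s.val)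

def InSymRho (r ρ : ℕ) (φ : Equiv.Perm (G r)) : Prop :=
  φ 1 = 1 ∧
    ∀ (g s : G r), s ∈ SS r →
      ((φ g)⁻¹ * φ (g * s)).norm ≤ ρ ∧ ((φ.symm g)⁻¹ * φ.symm (g * s)).norm ≤ ρ

/-- The pullback name of `x : [n] → C` at `v`, `x^σ_v(g) = x(σ(g)⁻¹ v)`. -/
def pull (r : ℕ) {n : ℕ} {C : Type*} (σ : G r →* Equiv.Perm (Fin n))
    (x : Fin n → C) (v : Fin n) : G r → C :=
  fun g => x ((σ g)⁻¹ v)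

lemma key_aux (r ρ n : ℕ)
    (σ : G r →* Equiv.Perm (Fin n)) (x : Fin n → A r)
    (φ : Fin n → Equiv.Perm (G r))
    (hφ : ∀ v : Fin n, InSymRho r ρ (φ v) ∧ E r (φ v) = pull r σ x v)
    (τ : G r →* Equiv.Perm (Fin n))
    (hτ : ∀ (g : G r) (v : Fin n), τ g v = σ (((φ v).symm g⁻¹)⁻¹) v) :
    ∀ (h : G r) (hh : h ∈ SS r) (hh' : h⁻¹ ∈ SS r) (v : Fin n),
      σ h v = τ ((x v ⟨h⁻¹, hh'⟩)⁻¹) v := by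
  intro h hh hh' v
  have h1 : (φ v) 1 = 1 := (hφ v).1.1
  have hE := congrFun (congrFun (hφ v).2 1) ⟨h⁻¹, hh'⟩
  simp only [E, pull, h1, one_mul, inv_one, map_one, inv_one, Equiv.Perm.coe_one, id_eq] at hE
  -- hE : φ v h⁻¹ = x v ⟨h⁻¹, hh'⟩
  rw [hτ]
  have : ((φ v).symm ((x v ⟨h⁻¹, hh'⟩)⁻¹)⁻¹) = h⁻¹ := by
    rw [inv_inv, ← hE, Equiv.symm_apply_apply]
  rw [this, inv_inv]

/-- `σ(h)v = τ((x(v)(h⁻¹))⁻¹)v` for `h ∈ S ∪ S⁻¹`, and consequently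
the map `(σ, x) ↦ (τ, x)` is injective. -/
theorem statement19 (r ρ n : ℕ) (hr : 1 ≤ r)
    (σ : G r →* Equiv.Perm (Fin n)) (x : Fin n → A r)
    (φ : Fin n → Equiv.Perm (G r))
    (hφ : ∀ v : Fin n, InSymRho r ρ (φ v) ∧ E r (φ v) = pull r σ x v)
    (τ : G r →* Equiv.Perm (Fin n))
    (hτ : ∀ (g : G r) (v : Fin n), τ g v = σ (((φ v).symm g⁻¹)⁻¹) v) :
    (∀ (h : G r) (hh : h ∈ SS r) (hh' : h⁻¹ ∈ SS r) (v : Fin n),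
        σ h v = τ ((x v ⟨h⁻¹, hh'⟩)⁻¹) v) ∧
    ∀ (σ' : G r →* Equiv.Perm (Fin n)) (φ' : Fin n → Equiv.Perm (G r)),
      (∀ v : Fin n, InSymRho r ρ (φ' v) ∧ E r (φ' v) = pull r σ' x v) →
      ∀ τ' : G r →* Equiv.Perm (Fin n),
        (∀ (g : G r) (v : Fin n), τ' g v = σ' (((φ' v).symm g⁻¹)⁻¹) v) →
        τ' = τ → σ' = σ := by
  refine ⟨key_aux r ρ n σ x φ hφ τ hτ, ?_⟩
  intro σ' φ' hφ' τ' hτ' hττ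
  have k := key_aux r ρ n σ x φ hφ τ hτ
  have k' := key_aux r ρ n σ' x φ' hφ' τ' hτ'
  apply FreeGroup.ext_hom
  intro i
  ext v
  have hh : FreeGroup.of i ∈ SS r := ⟨i, Or.inl rfl⟩
  have hh' : (FreeGroup.of i)⁻¹ ∈ SS r := ⟨i, Or.inr rfl⟩
  rw [k' _ hh hh' v, k _ hh hh' v, hττ]

end Stmt19
end
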